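/- arXiv:2409.13230 — 16 statements merged into one kernel-verified Lean document; each statement's English description precedes it below -/
import Mathlib

section
/- Let $(P, \cdot)$ be a perm algebra and $(A, \diamond)$ be a pre-Lie algebra. Define a bracket on $P \otimes A$ by $[p_1 \otimes a_1, p_2 \otimes a_2] = p_1 \cdot p_2 \otimes a_1 \diamond a_2 - p_2 \cdot p_1 \otimes a_2 \diamond a_1$. Then $(P \otimes A, [-,-])$ is a Lie algebra. -/
open TensorProduct

/-- The tensor product of a perm algebra and a pre-Lie algebra,
with the bracket `[p₁⊗a₁, p₂⊗a₂] = p₁·p₂ ⊗ a₁⋄a₂ - p₂·p₁ ⊗ a₂⋄a₁`, is a Lie algebra. -/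
theorem stmt0 {k P A : Type*} [Field k] [CharZero k]
    [AddCommGroup P] [Module k P] [AddCommGroup A] [Module k A]
    (mul : P →ₗ[k] P →ₗ[k] P)
    (hperm1 : ∀ p q r : P, mul p (mul q r) = mul (mul p q) r)
    (hperm2 : ∀ p q r : P, mul (mul p q) r = mul (mul q p) r)
    (dia : A →ₗ[k] A →ₗ[k] A)
    (hpre : ∀ a b c : A,
      dia (dia a b) c - dia a (dia b c) = dia (dia b a) c - dia b (dia a c))
    (B : (P ⊗[k] A) →ₗ[k] (P ⊗[k] A) →ₗ[k] (P ⊗[k] A))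
    (hB : ∀ (p₁ p₂ : P) (a₁ a₂ : A),
      B (p₁ ⊗ₜ[k] a₁) (p₂ ⊗ₜ[k] a₂) =
        (mul p₁ p₂) ⊗ₜ[k] (dia a₁ a₂) - (mul p₂ p₁) ⊗ₜ[k] (dia a₂ a₁)) :
    (∀ x, B x x = 0) ∧
    (∀ x y z, B (B x y) z + B (B y z) x + B (B z x) y = 0) := by
  -- skew symmetry
  have hskew : ∀ x y, B x y = - B y x := by
    intro x y
    induction x using TensorProduct.induction_on with
    | zero => simp
    | add u v hu hv => simp [map_add, hu, hv]; abel
    | tmul p₁ a₁ =>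
      induction y using TensorProduct.induction_on with
      | zero => simp
      | add u v hu hv => simp [map_add, LinearMap.add_apply, hu, hv]; abel
      | tmul p₂ a₂ => rw [hB, hB]; abel
  have core : ∀ (p₁ p₂ p₃ : P) (a₁ a₂ a₃ : A),
      B (B (p₁ ⊗ₜ[k] a₁) (p₂ ⊗ₜ[k] a₂)) (p₃ ⊗ₜ[k] a₃)
      + B (B (p₂ ⊗ₜ[k] a₂) (p₃ ⊗ₜ[k] a₃)) (p₁ ⊗ₜ[k] a₁)
      + B (B (p₃ ⊗ₜ[k] a₃) (p₁ ⊗ₜ[k] a₁)) (p₂ ⊗ₜ[k] a₂) = 0 := by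
    intro p₁ p₂ p₃ a₁ a₂ a₃
    simp only [hB, map_sub, LinearMap.sub_apply, hB, hperm1]
    rw [hperm2 p₂ p₁ p₃, hperm2 p₃ p₁ p₂, hperm2 p₃ p₂ p₁]
    have e1 : dia (dia a₁ a₂) a₃ - dia a₁ (dia a₂ a₃) - (dia (dia a₂ a₁) a₃ - dia a₂ (dia a₁ a₃)) = 0 :=
      sub_eq_zero.mpr (hpre a₁ a₂ a₃)
    have e2 : dia (dia a₂ a₃) a₁ - dia a₂ (dia a₃ a₁) - (dia (dia a₃ a₂) a₁ - dia a₃ (dia a₂ a₁)) = 0 :=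
      sub_eq_zero.mpr (hpre a₂ a₃ a₁)
    have e3 : dia (dia a₃ a₁) a₂ - dia a₃ (dia a₁ a₂) - (dia (dia a₁ a₃) a₂ - dia a₁ (dia a₃ a₂)) = 0 :=
      sub_eq_zero.mpr (hpre a₃ a₁ a₂)
    calc _ = mul (mul p₁ p₂) p₃ ⊗ₜ[k]
              (dia (dia a₁ a₂) a₃ - dia a₁ (dia a₂ a₃) - (dia (dia a₂ a₁) a₃ - dia a₂ (dia a₁ a₃)))
          + mul (mul p₂ p₃) p₁ ⊗ₜ[k]
              (dia (dia a₂ a₃) a₁ - dia a₂ (dia a₃ a₁) - (dia (dia a₃ a₂) a₁ - dia a₃ (dia a₂ a₁)))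
          + mul (mul p₁ p₃) p₂ ⊗ₜ[k]
              (dia (dia a₃ a₁) a₂ - dia a₃ (dia a₁ a₂) - (dia (dia a₁ a₃) a₂ - dia a₁ (dia a₃ a₂))) := by
            simp only [TensorProduct.tmul_sub]; abel
      _ = 0 := by rw [e1, e2, e3]; simp
  constructor
  · intro x
    have h := hskew x x
    have h2 : (2 : k) • B x x = 0 := by
      rw [two_smul]; nth_rewrite 1 [h]; abel
    have := smul_eq_zero.mp h2
    simpa using this
  · intro x y z
    induction x using TensorProduct.induction_on with
    | zero => simp
    | add u v hu hv =>
      simp only [map_add, LinearMap.add_apply] at hu hv ⊢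
      have h := congrArg₂ (HAdd.hAdd) hu hv
      rw [add_zero] at h
      rw [← h]; abel
    | tmul p₁ a₁ =>
      induction y using TensorProduct.induction_on with
      | zero => simp
      | add u v hu hv =>
        simp only [map_add, LinearMap.add_apply] at hu hv ⊢
        have h := congrArg₂ (HAdd.hAdd) hu hv
        rw [add_zero] at h
        rw [← h]; abel
      | tmul p₂ a₂ =>
        induction z using TensorProduct.induction_on with
        | zero => simp
        | add u v hu hv =>
          simp only [map_add, LinearMap.add_apply] at hu hv ⊢
          have h := congrArg₂ (HAdd.hAdd) hu hv
          rw [add_zero] at h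
          rw [← h]; abel
        | tmul p₃ a₃ => exact core p₁ p₂ p₃ a₁ a₂ a₃
end

section
/- Let $P = \{f_1 \partial_1 + f_2 \partial_2 : f_1, f_2 \in \mathbf{k}[x_1^{\pm}, x_2^{\pm}]\}$ with binary operation $(x_1^{i_1} x_2^{i_2} \partial_s) \cdot (x_1^{j_1} x_2^{j_2} \partial_t) = \delta_{s,1} x_1^{i_1+j_1+1} x_2^{i_2+j_2} \partial_t + \delta_{s,2} x_1^{i_1+j_1} x_2^{i_2+j_2+1} \partial_t$. Then $(P, \cdot)$ is a perm algebra, i.e., $p \cdot (q \cdot r) = (p \cdot q) \cdot r = (q \cdot p) \cdot r$ for all $p, q, r \in P$. -/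
/-! Write `x^i ∂ₛ` for the basis vector at `(i, s)`, with `s = 0` standing for `∂₁`. The product is
`(x^i ∂ₛ) · (x^j ∂ₜ) = x^(i + j) xₛ ∂ₜ`: the left factor acts on the right one as multiplication by
the Laurent monomial `x^i xₛ`. These multiplications commute, so `p · (q · r)`, `(p · q) · r` and
`(q · p) · r` all equal `x^(i + j + l) xₛ xₜ ∂ᵤ` on basis vectors, and trilinearity does the rest. -/

namespace LinearMap

variable {R M : Type*} [CommSemiring R] [AddCommMonoid M] [Module R M]

def IsPermAt (mul : M →ₗ[R] M →ₗ[R] M) (p q r : M) : Prop :=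
  mul p (mul q r) = mul (mul p q) r ∧ mul (mul p q) r = mul (mul q p) r

def IsPerm (mul : M →ₗ[R] M →ₗ[R] M) : Prop :=
  ∀ p q r, IsPermAt mul p q r

def assocRight (mul : M →ₗ[R] M →ₗ[R] M) : M →ₗ[R] M →ₗ[R] M →ₗ[R] M :=
  ((llcomp R M M M).comp mul).compl₂ mul

def assocLeft (mul : M →ₗ[R] M →ₗ[R] M) : M →ₗ[R] M →ₗ[R] M →ₗ[R] M :=
  (llcomp R M M (M →ₗ[R] M) mul).comp mul

@[simp] lemma assocRight_apply (mul : M →ₗ[R] M →ₗ[R] M) (p q r : M) :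
    assocRight mul p q r = mul p (mul q r) := rfl

@[simp] lemma assocLeft_apply (mul : M →ₗ[R] M →ₗ[R] M) (p q r : M) :
    assocLeft mul p q r = mul (mul p q) r := rfl

lemma isPerm_iff_assoc_eq (mul : M →ₗ[R] M →ₗ[R] M) :
    IsPerm mul ↔ assocRight mul = assocLeft mul ∧ assocLeft mul = (assocLeft mul).flip := by
  simp only [IsPerm, IsPermAt, LinearMap.ext_iff, flip_apply, assocRight_apply, assocLeft_apply,
    forall_and]

end LinearMap

open LinearMap in
lemma Finsupp.isPerm_of_single {R α : Type*} [CommSemiring R]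
    (mul : (α →₀ R) →ₗ[R] (α →₀ R) →ₗ[R] (α →₀ R))
    (h : ∀ a b c, IsPermAt mul (single a 1) (single b 1) (single c 1)) :
    IsPerm mul := by
  rw [isPerm_iff_assoc_eq]
  constructor <;> ext a b c : 6
  · exact (h a b c).1
  · exact (h a b c).2

theorem stmt1_general {k : Type*} [Field k]
    (mul : ((ℤ × ℤ × Fin 2) →₀ k) →ₗ[k] ((ℤ × ℤ × Fin 2) →₀ k) →ₗ[k] ((ℤ × ℤ × Fin 2) →₀ k))
    (hmul : ∀ (i₁ i₂ j₁ j₂ : ℤ) (s t : Fin 2),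
      mul (Finsupp.single (i₁, i₂, s) 1) (Finsupp.single (j₁, j₂, t) 1) =
        if s = 0 then Finsupp.single (i₁ + j₁ + 1, i₂ + j₂, t) 1
        else Finsupp.single (i₁ + j₁, i₂ + j₂ + 1, t) 1) :
    ∀ p q r, mul p (mul q r) = mul (mul p q) r ∧ mul (mul p q) r = mul (mul q p) r := by
  refine Finsupp.isPerm_of_single mul ?_
  rintro ⟨i₁, i₂, s⟩ ⟨j₁, j₂, t⟩ ⟨l₁, l₂, u⟩
  fin_cases s <;> fin_cases t <;>
    simp only [LinearMap.IsPermAt, Fin.zero_eta, Fin.mk_one, Fin.isValue, hmul, one_ne_zero,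
      ↓reduceIte] <;>
    constructor <;> ring_nf

/-- The operation
`(x₁^{i₁}x₂^{i₂}∂ₛ)·(x₁^{j₁}x₂^{j₂}∂ₜ) = δ_{s,1} x₁^{i₁+j₁+1}x₂^{i₂+j₂}∂ₜ + δ_{s,2} x₁^{i₁+j₁}x₂^{i₂+j₂+1}∂ₜ`
on the free Laurent-polynomial module `P = {f₁∂₁ + f₂∂₂}` is a perm algebra. Here `P` is
modeled as the free `k`-module on basis `(i₁, i₂, s) ↔ x₁^{i₁}x₂^{i₂}∂ₛ`. -/
theorem stmt1 {k : Type*} [Field k] [CharZero k]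
    (mul : ((ℤ × ℤ × Fin 2) →₀ k) →ₗ[k] ((ℤ × ℤ × Fin 2) →₀ k) →ₗ[k] ((ℤ × ℤ × Fin 2) →₀ k))
    (hmul : ∀ (i₁ i₂ j₁ j₂ : ℤ) (s t : Fin 2),
      mul (Finsupp.single (i₁, i₂, s) 1) (Finsupp.single (j₁, j₂, t) 1) =
        if s = 0 then Finsupp.single (i₁ + j₁ + 1, i₂ + j₂, t) 1
        else Finsupp.single (i₁ + j₁, i₂ + j₂ + 1, t) 1) :
    ∀ p q r, mul p (mul q r) = mul (mul p q) r ∧ mul (mul p q) r = mul (mul q p) r :=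
  stmt1_general mul hmul
end

section
/- Let $A = \mathbf{k}[t, t^{-1}] \oplus \mathbf{k}[s, s^{-1}]$ with binary operation $\diamond$ given by $t^i \diamond t^j = j t^{i+j-1}$, $t^i \diamond s^j = (2i+j-1)s^{i+j-1}$, $s^j \diamond t^i = i s^{i+j-1}$, $s^i \diamond s^j = 0$ for all $i, j \in \mathbb{Z}$. Then $(A, \diamond)$ is a pre-Lie algebra, i.e., $(a \diamond b) \diamond c - a \diamond (b \diamond c) = (b \diamond a) \diamond c - b \diamond (a \diamond c)$ for all $a, b, c \in A$. -/
/-! Both sides of the pre-Lie identity are trilinear in `a, b, c`, so it suffices to verify it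
on basis monomials. There each of the eight cases `tᵢ/sᵢ` is a scalar multiple of a single
monomial, and the identity reduces to a polynomial identity in the exponents. -/

namespace LinearMap

variable {R M : Type*} [CommRing R] [AddCommGroup M] [Module R M]

def associator (μ : M →ₗ[R] M →ₗ[R] M) : M →ₗ[R] M →ₗ[R] M →ₗ[R] M :=
  μ.compr₂ μ - ((llcomp R M M M).comp μ).compl₂ μ

@[simp]
theorem associator_apply (μ : M →ₗ[R] M →ₗ[R] M) (a b c : M) :
    associator μ a b c = μ (μ a b) c - μ a (μ b c) := rfl

theorem associator_comm_of_basis {ι : Type*} (e : Module.Basis ι R M) (μ : M →ₗ[R] M →ₗ[R] M)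
    (h : ∀ i j l, associator μ (e i) (e j) (e l) = associator μ (e j) (e i) (e l))
    (a b c : M) : associator μ a b c = associator μ b a c := by
  have hflip : associator μ = (associator μ).flip :=
    e.ext fun i => e.ext fun j => e.ext fun l => h i j l
  exact congr($hflip a b c)

end LinearMap

theorem stmt2_general {k : Type*} [Field k]
    (dia : ((Bool × ℤ) →₀ k) →ₗ[k] ((Bool × ℤ) →₀ k) →ₗ[k] ((Bool × ℤ) →₀ k))
    (htt : ∀ i j : ℤ, dia (Finsupp.single (false, i) 1) (Finsupp.single (false, j) 1) =
      j • Finsupp.single (false, i + j - 1) (1 : k))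
    (hts : ∀ i j : ℤ, dia (Finsupp.single (false, i) 1) (Finsupp.single (true, j) 1) =
      (2 * i + j - 1) • Finsupp.single (true, i + j - 1) (1 : k))
    (hst : ∀ i j : ℤ, dia (Finsupp.single (true, j) 1) (Finsupp.single (false, i) 1) =
      i • Finsupp.single (true, i + j - 1) (1 : k))
    (hss : ∀ i j : ℤ, dia (Finsupp.single (true, i) 1) (Finsupp.single (true, j) 1) = 0) :
    ∀ a b c, dia (dia a b) c - dia a (dia b c) = dia (dia b a) c - dia b (dia a c) := by
  refine LinearMap.associator_comm_of_basis Finsupp.basisSingleOne dia ?_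
  rintro ⟨_ | _, i⟩ ⟨_ | _, j⟩ ⟨_ | _, l⟩ <;>
    simp only [LinearMap.associator_apply, Finsupp.coe_basisSingleOne, htt, hts, hst, hss,
      map_zsmul, LinearMap.smul_apply, map_zero, LinearMap.zero_apply, smul_zero] <;>
    -- `ring_nf` identifies exponents such as `i + j - 1 + l - 1` and `i + (j + l - 1) - 1`,
    -- so that `module` sees equal basis vectors
    ring_nf <;> module

/-- On `A = k[t,t⁻¹] ⊕ k[s,s⁻¹]` (modeled as the free `k`-module on
`(false, i) ↔ tⁱ` and `(true, i) ↔ sⁱ`), the operation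
`tⁱ⋄tʲ = j t^{i+j-1}`, `tⁱ⋄sʲ = (2i+j-1)s^{i+j-1}`, `sʲ⋄tⁱ = i s^{i+j-1}`, `sⁱ⋄sʲ = 0`
defines a pre-Lie algebra. -/
theorem stmt2 {k : Type*} [Field k] [CharZero k]
    (dia : ((Bool × ℤ) →₀ k) →ₗ[k] ((Bool × ℤ) →₀ k) →ₗ[k] ((Bool × ℤ) →₀ k))
    (htt : ∀ i j : ℤ, dia (Finsupp.single (false, i) 1) (Finsupp.single (false, j) 1) =
      j • Finsupp.single (false, i + j - 1) (1 : k))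
    (hts : ∀ i j : ℤ, dia (Finsupp.single (false, i) 1) (Finsupp.single (true, j) 1) =
      (2 * i + j - 1) • Finsupp.single (true, i + j - 1) (1 : k))
    (hst : ∀ i j : ℤ, dia (Finsupp.single (true, j) 1) (Finsupp.single (false, i) 1) =
      i • Finsupp.single (true, i + j - 1) (1 : k))
    (hss : ∀ i j : ℤ, dia (Finsupp.single (true, i) 1) (Finsupp.single (true, j) 1) = 0) :
    ∀ a b c, dia (dia a b) c - dia a (dia b c) = dia (dia b a) c - dia b (dia a c) :=
  stmt2_general dia htt hts hst hss
end

section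
/- Let $P$ be a vector space with bilinear operation $\cdot$, and let $(A, \diamond)$ be the $\mathbb{Z}$-graded pre-Lie algebra on $\mathbf{k}[t,t^{-1}] \oplus \mathbf{k}[s,s^{-1}]$ with $t^i \diamond t^j = j t^{i+j-1}$, $t^i \diamond s^j = (2i+j-1)s^{i+j-1}$, $s^j \diamond t^i = i s^{i+j-1}$, $s^i \diamond s^j = 0$. If the bracket $[p_1 \otimes a_1, p_2 \otimes a_2] = p_1 \cdot p_2 \otimes a_1 \diamond a_2 - p_2 \cdot p_1 \otimes a_2 \diamond a_1$ defines a Lie algebra structure on $P \otimes A$, then $(P, \cdot)$ is a perm algebra. -/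
open TensorProduct

set_option maxHeartbeats 2000000 in
/-- Let `P` be a vector space with a bilinear operation `mul`, and let `A` be the
`ℤ`-graded pre-Lie algebra `k[t,t⁻¹] ⊕ k[s,s⁻¹]` (basis `(false,i) ↔ tⁱ`, `(true,i) ↔ sⁱ`) with
`tⁱ⋄tʲ = j t^{i+j-1}`, `tⁱ⋄sʲ = (2i+j-1)s^{i+j-1}`, `sʲ⋄tⁱ = i s^{i+j-1}`, `sⁱ⋄sʲ = 0`.
If the bracket `[p₁⊗a₁, p₂⊗a₂] = p₁·p₂ ⊗ a₁⋄a₂ - p₂·p₁ ⊗ a₂⋄a₁` defines a Lie algebra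
structure on `P ⊗ A`, then `(P, ·)` is a perm algebra. -/
theorem stmt4 {k P : Type*} [Field k] [CharZero k] [AddCommGroup P] [Module k P]
    (mul : P →ₗ[k] P →ₗ[k] P)
    (dia : ((Bool × ℤ) →₀ k) →ₗ[k] ((Bool × ℤ) →₀ k) →ₗ[k] ((Bool × ℤ) →₀ k))
    (htt : ∀ i j : ℤ, dia (Finsupp.single (false, i) 1) (Finsupp.single (false, j) 1) =
      j • Finsupp.single (false, i + j - 1) (1 : k))
    (hts : ∀ i j : ℤ, dia (Finsupp.single (false, i) 1) (Finsupp.single (true, j) 1) =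
      (2 * i + j - 1) • Finsupp.single (true, i + j - 1) (1 : k))
    (hst : ∀ i j : ℤ, dia (Finsupp.single (true, j) 1) (Finsupp.single (false, i) 1) =
      i • Finsupp.single (true, i + j - 1) (1 : k))
    (hss : ∀ i j : ℤ, dia (Finsupp.single (true, i) 1) (Finsupp.single (true, j) 1) = 0)
    (B : (P ⊗[k] ((Bool × ℤ) →₀ k)) →ₗ[k] (P ⊗[k] ((Bool × ℤ) →₀ k)) →ₗ[k]
      (P ⊗[k] ((Bool × ℤ) →₀ k)))
    (hB : ∀ (p₁ p₂ : P) (a₁ a₂ : (Bool × ℤ) →₀ k),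
      B (p₁ ⊗ₜ[k] a₁) (p₂ ⊗ₜ[k] a₂) =
        (mul p₁ p₂) ⊗ₜ[k] (dia a₁ a₂) - (mul p₂ p₁) ⊗ₜ[k] (dia a₂ a₁))
    (halt : ∀ x, B x x = 0)
    (hjac : ∀ x y z, B (B x y) z + B (B y z) x + B (B z x) y = 0) :
    ∀ p q r : P, mul p (mul q r) = mul (mul p q) r ∧ mul (mul p q) r = mul (mul q p) r := by
  intro p q r
  have Bsub : ∀ u v z : P ⊗[k] ((Bool × ℤ) →₀ k), B (u - v) z = B u z - B v z := by
    intro u v z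
    have h := map_sub (B.flip z) u v
    simpa [LinearMap.flip_apply] using h
  have key : ∀ (a : Bool × ℤ) (c : k), Finsupp.single a c = c • Finsupp.single a 1 := by
    intro a c; simp [Finsupp.smul_single']
  have htt'' : ∀ (i j : ℤ) (c c' : k), dia (Finsupp.single (false, i) c) (Finsupp.single (false, j) c') =
      (c * c' * (j : k)) • Finsupp.single (false, i + j - 1) (1 : k) := by
    intro i j c c'
    rw [key _ c, key _ c']
    simp only [map_smul, LinearMap.smul_apply, htt]
    module
  have hts'' : ∀ (i j : ℤ) (c c' : k), dia (Finsupp.single (false, i) c) (Finsupp.single (true, j) c') =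
      (c * c' * ((2 * i + j - 1 : ℤ) : k)) • Finsupp.single (true, i + j - 1) (1 : k) := by
    intro i j c c'
    rw [key _ c, key _ c']
    simp only [map_smul, LinearMap.smul_apply, hts]
    module
  have hst'' : ∀ (i j : ℤ) (c c' : k), dia (Finsupp.single (true, j) c) (Finsupp.single (false, i) c') =
      (c * c' * ((i : ℤ) : k)) • Finsupp.single (true, i + j - 1) (1 : k) := by
    intro i j c c'
    rw [key _ c, key _ c']
    simp only [map_smul, LinearMap.smul_apply, hst]
    module
  have hss'' : ∀ (i j : ℤ) (c c' : k), dia (Finsupp.single (true, i) c) (Finsupp.single (true, j) c') = 0 := by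
    intro i j c c'
    rw [key _ c, key _ c']
    simp only [map_smul, LinearMap.smul_apply, hss, smul_zero]
  have e1 := congrArg ((TensorProduct.rid k P).toLinearMap ∘ₗ
      LinearMap.lTensor P (Finsupp.lapply (((true, -2)) : Bool × ℤ)))
    (hjac (p ⊗ₜ[k] Finsupp.single (false,0) 1) (q ⊗ₜ[k] Finsupp.single (false,0) 1)
      (r ⊗ₜ[k] Finsupp.single (true,0) 1))
  norm_num [hB, Bsub, htt'', hts'', hst'', hss'', map_smul, map_add, map_zero, LinearMap.smul_apply,
    LinearMap.zero_apply, TensorProduct.tmul_smul, TensorProduct.tmul_zero, smul_zero,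
    LinearMap.coe_comp, Function.comp_apply, LinearMap.lTensor_tmul, Finsupp.lapply_apply,
    LinearEquiv.coe_coe, TensorProduct.rid_tmul, Finsupp.single_apply] at e1
  have e2 := congrArg ((TensorProduct.rid k P).toLinearMap ∘ₗ
      LinearMap.lTensor P (Finsupp.lapply (((true, -1)) : Bool × ℤ)))
    (hjac (p ⊗ₜ[k] Finsupp.single (false,0) 1) (q ⊗ₜ[k] Finsupp.single (false,1) 1)
      (r ⊗ₜ[k] Finsupp.single (true,0) 1))
  norm_num [hB, Bsub, htt'', hts'', hst'', hss'', map_smul, map_add, map_zero, LinearMap.smul_apply,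
    LinearMap.zero_apply, TensorProduct.tmul_smul, TensorProduct.tmul_zero, smul_zero,
    LinearMap.coe_comp, Function.comp_apply, LinearMap.lTensor_tmul, Finsupp.lapply_apply,
    LinearEquiv.coe_coe, TensorProduct.rid_tmul, Finsupp.single_apply] at e2
  have e3 := congrArg ((TensorProduct.rid k P).toLinearMap ∘ₗ
      LinearMap.lTensor P (Finsupp.lapply (((true, 0)) : Bool × ℤ)))
    (hjac (p ⊗ₜ[k] Finsupp.single (false,0) 1) (q ⊗ₜ[k] Finsupp.single (false,2) 1)
      (r ⊗ₜ[k] Finsupp.single (true,0) 1))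
  norm_num [hB, Bsub, htt'', hts'', hst'', hss'', map_smul, map_add, map_zero, LinearMap.smul_apply,
    LinearMap.zero_apply, TensorProduct.tmul_smul, TensorProduct.tmul_zero, smul_zero,
    LinearMap.coe_comp, Function.comp_apply, LinearMap.lTensor_tmul, Finsupp.lapply_apply,
    LinearEquiv.coe_coe, TensorProduct.rid_tmul, Finsupp.single_apply] at e3
  have e4 := congrArg ((TensorProduct.rid k P).toLinearMap ∘ₗ
      LinearMap.lTensor P (Finsupp.lapply (((false, 0)) : Bool × ℤ)))
    (hjac (p ⊗ₜ[k] Finsupp.single (false,0) 1) (q ⊗ₜ[k] Finsupp.single (false,2) 1)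
      (r ⊗ₜ[k] Finsupp.single (false,0) 1))
  norm_num [hB, Bsub, htt'', hts'', hst'', hss'', map_smul, map_add, map_zero, LinearMap.smul_apply,
    LinearMap.zero_apply, TensorProduct.tmul_smul, TensorProduct.tmul_zero, smul_zero,
    LinearMap.coe_comp, Function.comp_apply, LinearMap.lTensor_tmul, Finsupp.lapply_apply,
    LinearEquiv.coe_coe, TensorProduct.rid_tmul, Finsupp.single_apply] at e4
  have e5 := congrArg ((TensorProduct.rid k P).toLinearMap ∘ₗ
      LinearMap.lTensor P (Finsupp.lapply (((true, -1)) : Bool × ℤ)))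
    (hjac (p ⊗ₜ[k] Finsupp.single (false,1) 1) (q ⊗ₜ[k] Finsupp.single (false,0) 1)
      (r ⊗ₜ[k] Finsupp.single (true,0) 1))
  norm_num [hB, Bsub, htt'', hts'', hst'', hss'', map_smul, map_add, map_zero, LinearMap.smul_apply,
    LinearMap.zero_apply, TensorProduct.tmul_smul, TensorProduct.tmul_zero, smul_zero,
    LinearMap.coe_comp, Function.comp_apply, LinearMap.lTensor_tmul, Finsupp.lapply_apply,
    LinearEquiv.coe_coe, TensorProduct.rid_tmul, Finsupp.single_apply] at e5
  have e7 := congrArg ((TensorProduct.rid k P).toLinearMap ∘ₗ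
      LinearMap.lTensor P (Finsupp.lapply (((true, 0)) : Bool × ℤ)))
    (hjac (p ⊗ₜ[k] Finsupp.single (false,2) 1) (q ⊗ₜ[k] Finsupp.single (false,0) 1)
      (r ⊗ₜ[k] Finsupp.single (true,0) 1))
  norm_num [hB, Bsub, htt'', hts'', hst'', hss'', map_smul, map_add, map_zero, LinearMap.smul_apply,
    LinearMap.zero_apply, TensorProduct.tmul_smul, TensorProduct.tmul_zero, smul_zero,
    LinearMap.coe_comp, Function.comp_apply, LinearMap.lTensor_tmul, Finsupp.lapply_apply,
    LinearEquiv.coe_coe, TensorProduct.rid_tmul, Finsupp.single_apply] at e7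
  have e8 := congrArg ((TensorProduct.rid k P).toLinearMap ∘ₗ
      LinearMap.lTensor P (Finsupp.lapply (((false, 0)) : Bool × ℤ)))
    (hjac (p ⊗ₜ[k] Finsupp.single (false,2) 1) (q ⊗ₜ[k] Finsupp.single (false,0) 1)
      (r ⊗ₜ[k] Finsupp.single (false,0) 1))
  norm_num [hB, Bsub, htt'', hts'', hst'', hss'', map_smul, map_add, map_zero, LinearMap.smul_apply,
    LinearMap.zero_apply, TensorProduct.tmul_smul, TensorProduct.tmul_zero, smul_zero,
    LinearMap.coe_comp, Function.comp_apply, LinearMap.lTensor_tmul, Finsupp.lapply_apply,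
    LinearEquiv.coe_coe, TensorProduct.rid_tmul, Finsupp.single_apply] at e8
  constructor
  · linear_combination (norm := module) (-(4:k)⁻¹) • e1 + ((2:k)⁻¹) • e2 + (-(4:k)⁻¹) • e3 +
      ((4:k)⁻¹) • e4
  · linear_combination (norm := module) (-(2:k)⁻¹) • e2 + ((4:k)⁻¹) • e3 + (-(4:k)⁻¹) • e4 +
      (-(2:k)⁻¹) • e5 + ((4:k)⁻¹) • e7 + (-(4:k)⁻¹) • e8
end

section
/- Let $P$ be a vector space with bilinear operation $\cdot$, let $n \geq 2$, and let $(W_n, \diamond)$ be the pre-Lie algebra on $\{\sum_i f_i \partial_i : f_i \in \mathbf{k}[x_1^{\pm},\ldots,x_n^{\pm}]\}$ with $u\partial_i \diamond v\partial_j = u \cdot \partial_i(v) \partial_j$. If the bracket $[p_1 \otimes a_1, p_2 \otimes a_2] = p_1 \cdot p_2 \otimes a_1 \diamond a_2 - p_2 \cdot p_1 \otimes a_2 \diamond a_1$ defines a Lie algebra structure on $P \otimes W_n$, then $(P, \cdot)$ is a perm algebra. -/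
open TensorProduct

/-- Let `P` be a vector space with a bilinear operation `mul`, `n ≥ 2`, and let
`Wₙ` be the pre-Lie algebra of vector fields on Laurent polynomials in `n` variables, modeled as
the free `k`-module on basis `(m, i) ↔ x^m ∂ᵢ` with
`x^m ∂ᵢ ⋄ x^{m'} ∂ⱼ = m'ᵢ • x^{m + m' - eᵢ} ∂ⱼ`.
If the bracket `[p₁⊗a₁, p₂⊗a₂] = p₁·p₂ ⊗ a₁⋄a₂ - p₂·p₁ ⊗ a₂⋄a₁` defines a Lie algebra
structure on `P ⊗ Wₙ`, then `(P, mul)` is a perm algebra. -/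
theorem stmt5 {k P : Type*} [Field k] [CharZero k] [AddCommGroup P] [Module k P]
    (n : ℕ) (hn : 2 ≤ n)
    (mul : P →ₗ[k] P →ₗ[k] P)
    (dia : (((Fin n → ℤ) × Fin n) →₀ k) →ₗ[k] (((Fin n → ℤ) × Fin n) →₀ k) →ₗ[k]
      (((Fin n → ℤ) × Fin n) →₀ k))
    (hdia : ∀ (m m' : Fin n → ℤ) (i j : Fin n),
      dia (Finsupp.single (m, i) 1) (Finsupp.single (m', j) 1) =
        (m' i) • Finsupp.single ((fun l => m l + m' l - if l = i then 1 else 0), j) (1 : k))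
    (B : (P ⊗[k] (((Fin n → ℤ) × Fin n) →₀ k)) →ₗ[k]
      (P ⊗[k] (((Fin n → ℤ) × Fin n) →₀ k)) →ₗ[k] (P ⊗[k] (((Fin n → ℤ) × Fin n) →₀ k)))
    (hB : ∀ (p₁ p₂ : P) (a₁ a₂ : ((Fin n → ℤ) × Fin n) →₀ k),
      B (p₁ ⊗ₜ[k] a₁) (p₂ ⊗ₜ[k] a₂) =
        (mul p₁ p₂) ⊗ₜ[k] (dia a₁ a₂) - (mul p₂ p₁) ⊗ₜ[k] (dia a₂ a₁))
    (halt : ∀ x, B x x = 0)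
    (hjac : ∀ x y z, B (B x y) z + B (B y z) x + B (B z x) y = 0) :
    ∀ p q r : P, mul p (mul q r) = mul (mul p q) r ∧ mul (mul p q) r = mul (mul q p) r := by
  classical
  -- extraction lemma: u ⊗ (basis vector) = 0 → u = 0
  have extract : ∀ (u : P) (pt : (Fin n → ℤ) × Fin n),
      u ⊗ₜ[k] (Finsupp.single pt (1:k)) = 0 → u = 0 := by
    intro u pt h
    have h2 := congrArg (fun x => (TensorProduct.rid k P)
      ((LinearMap.lTensor P (Finsupp.lapply pt)) x)) h
    simpa using h2
  have h0 : 0 < n := by omega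
  have h1 : 1 < n := by omega
  set i0 : Fin n := ⟨0, h0⟩ with hi0
  set i1 : Fin n := ⟨1, h1⟩ with hi1
  have hne : i0 ≠ i1 := by
    intro h
    have := congrArg Fin.val h
    simp [hi0, hi1] at this
  set zv : Fin n → ℤ := fun _ => 0 with hzv
  set e0 : Fin n → ℤ := fun l => if l = i0 then 1 else 0 with he0
  set e1 : Fin n → ℤ := fun l => if l = i1 then 1 else 0 with he1
  set w2 : Fin n → ℤ := fun l => if l = i0 then 2 else 0 with hw2
  -- generic dia evaluators
  have Dzero : ∀ (m m' : Fin n → ℤ) (i j : Fin n), m' i = 0 →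
      dia (Finsupp.single (m, i) 1) (Finsupp.single (m', j) 1) = 0 := by
    intro m m' i j h
    rw [hdia, h, zero_smul]
  have Done : ∀ (m m' m'' : Fin n → ℤ) (i j : Fin n), m' i = 1 →
      (∀ l, m l + m' l - (if l = i then 1 else 0) = m'' l) →
      dia (Finsupp.single (m, i) 1) (Finsupp.single (m', j) 1)
        = Finsupp.single (m'', j) (1:k) := by
    intro m m' m'' i j hc hf
    have e : (fun l => m l + m' l - if l = i then 1 else 0) = m'' := funext hf
    rw [hdia, hc, e, one_smul]
  have Dtwo : ∀ (m m' m'' : Fin n → ℤ) (i j : Fin n), m' i = 2 →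
      (∀ l, m l + m' l - (if l = i then 1 else 0) = m'' l) →
      dia (Finsupp.single (m, i) 1) (Finsupp.single (m', j) 1)
        = (2:k) • Finsupp.single (m'', j) (1:k) := by
    intro m m' m'' i j hc hf
    have e : (fun l => m l + m' l - if l = i then 1 else 0) = m'' := funext hf
    rw [hdia, hc, e, two_zsmul, two_smul]
  -- B is additive in its first argument even through subtraction
  have hBsub : ∀ (u v w : P ⊗[k] (((Fin n → ℤ) × Fin n) →₀ k)),
      B (u - v) w = B u w - B v w := by
    intro u v w
    rw [eq_sub_iff_add_eq, ← LinearMap.add_apply, ← map_add, sub_add_cancel]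
  -- expansion of a double bracket
  have key : ∀ (p1 p2 p3 : P) (a b c : ((Fin n → ℤ) × Fin n) →₀ k),
      B (B (p1 ⊗ₜ[k] a) (p2 ⊗ₜ[k] b)) (p3 ⊗ₜ[k] c) =
        (mul (mul p1 p2) p3 ⊗ₜ[k] dia (dia a b) c
          - mul p3 (mul p1 p2) ⊗ₜ[k] dia c (dia a b))
        - (mul (mul p2 p1) p3 ⊗ₜ[k] dia (dia b a) c
          - mul p3 (mul p2 p1) ⊗ₜ[k] dia c (dia b a)) := by
    intro p1 p2 p3 a b c
    rw [hB p1 p2 a b, hBsub, hB, hB]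
  -- dia facts for the associativity computation
  have F1 : dia (Finsupp.single (e1, i0) 1) (Finsupp.single (zv, i1) 1) = 0 :=
    Dzero _ _ _ _ (by simp [hzv])
  have F2 : dia (Finsupp.single (zv, i1) 1) (Finsupp.single (e1, i0) 1)
      = Finsupp.single (zv, i0) (1:k) :=
    Done _ _ _ _ _ (by simp [he1])
      (fun l => by by_cases h : l = i1 <;> simp [hzv, he1, h])
  have F3 : dia (Finsupp.single (zv, i0) 1) (Finsupp.single (e1, i1) 1) = 0 :=
    Dzero _ _ _ _ (by simp [he1, hne])
  have F4 : dia (Finsupp.single (e1, i1) 1) (Finsupp.single (zv, i0) 1) = 0 :=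
    Dzero _ _ _ _ (by simp [hzv])
  have F5 : dia (Finsupp.single (zv, i1) 1) (Finsupp.single (e1, i1) 1)
      = Finsupp.single (zv, i1) (1:k) :=
    Done _ _ _ _ _ (by simp [he1])
      (fun l => by by_cases h : l = i1 <;> simp [hzv, he1, h])
  have F6 : dia (Finsupp.single (e1, i1) 1) (Finsupp.single (zv, i1) 1) = 0 :=
    Dzero _ _ _ _ (by simp [hzv])
  have F7 : dia (Finsupp.single (e1, i1) 1) (Finsupp.single (e1, i0) 1)
      = Finsupp.single (e1, i0) (1:k) :=
    Done _ _ _ _ _ (by simp [he1])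
      (fun l => by by_cases h : l = i1 <;> simp [he1, h])
  have F8 : dia (Finsupp.single (e1, i0) 1) (Finsupp.single (e1, i1) 1) = 0 :=
    Dzero _ _ _ _ (by simp [he1, hne])
  -- associativity
  have assoc : ∀ p q r : P, mul (mul p q) r = mul p (mul q r) := by
    intro p q r
    have J := hjac (r ⊗ₜ[k] Finsupp.single (e1, i0) (1:k))
      (p ⊗ₜ[k] Finsupp.single (zv, i1) (1:k)) (q ⊗ₜ[k] Finsupp.single (e1, i1) (1:k))
    rw [key, key, key] at J
    simp only [F1, F2, F3, F4, F5, F6, F7, F8, map_zero, LinearMap.zero_apply,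
      tmul_zero, sub_zero, zero_sub, sub_self, neg_zero, zero_add, add_zero,
      neg_neg] at J
    have hsub : (mul (mul p q) r - mul p (mul q r)) ⊗ₜ[k]
        Finsupp.single ((zv, i0)) (1:k) = 0 := by
      rw [sub_tmul]
      conv_rhs => rw [← J]
      abel
    have := extract _ _ hsub
    exact sub_eq_zero.mp this
  -- dia facts for the left-commutativity computation
  have G1 : dia (Finsupp.single (zv, i0) 1) (Finsupp.single (w2, i0) 1)
      = (2:k) • Finsupp.single (e0, i0) (1:k) :=
    Dtwo _ _ _ _ _ (by simp [hw2])
      (fun l => by by_cases h : l = i0 <;> simp [hzv, hw2, he0, h])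
  have G2 : dia (Finsupp.single (w2, i0) 1) (Finsupp.single (zv, i0) 1) = 0 :=
    Dzero _ _ _ _ (by simp [hzv])
  have G3 : dia (Finsupp.single (e0, i0) 1) (Finsupp.single (zv, i0) 1) = 0 :=
    Dzero _ _ _ _ (by simp [hzv])
  have G4 : dia (Finsupp.single (zv, i0) 1) (Finsupp.single (e0, i0) 1)
      = Finsupp.single (zv, i0) (1:k) :=
    Done _ _ _ _ _ (by simp [he0])
      (fun l => by by_cases h : l = i0 <;> simp [hzv, he0, h])
  have G5 : dia (Finsupp.single (zv, i0) 1) (Finsupp.single (zv, i0) 1) = 0 :=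
    Dzero _ _ _ _ (by simp [hzv])
  -- left commutativity : x (y z) = y (x z)
  have lcomm : ∀ x y z : P, mul x (mul y z) = mul y (mul x z) := by
    intro x y z
    have J := hjac (x ⊗ₜ[k] Finsupp.single (zv, i0) (1:k))
      (z ⊗ₜ[k] Finsupp.single (w2, i0) (1:k)) (y ⊗ₜ[k] Finsupp.single (zv, i0) (1:k))
    rw [key, key, key] at J
    simp only [G1, G2, G3, G4, G5, map_zero, LinearMap.zero_apply, LinearMap.map_smul,
      LinearMap.smul_apply, smul_zero, tmul_zero, tmul_smul, sub_zero, zero_sub,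
      sub_self, neg_zero, zero_add, add_zero, neg_neg, smul_smul] at J
    -- J should now say : 2 • (x (y z) ⊗ E) - 2 • (y (x z) ⊗ E) = 0 (up to shape)
    have hsub : ((2:k) • (mul x (mul y z) - mul y (mul x z))) ⊗ₜ[k]
        Finsupp.single ((zv, i0)) (1:k) = 0 := by
      rw [smul_sub, sub_tmul]
      simp only [← smul_tmul']
      conv_rhs => rw [← J]
      abel
    have h2 := extract _ _ hsub
    have h3 : mul x (mul y z) - mul y (mul x z) = 0 := by
      rcases smul_eq_zero.mp h2 with h | h
      · exact absurd h two_ne_zero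
      · exact h
    exact sub_eq_zero.mp h3
  intro p q r
  refine ⟨(assoc p q r).symm, ?_⟩
  calc mul (mul p q) r = mul p (mul q r) := assoc p q r
    _ = mul q (mul p r) := lcomm p q r
    _ = mul (mul q p) r := (assoc q p r).symm
end

section
/- Let $A$ be a vector space with bilinear operation $\diamond$, and let $(P, \cdot)$ be the $\mathbb{Z}$-graded perm algebra on $\{f_1\partial_1 + f_2\partial_2 : f_i \in \mathbf{k}[x_1^{\pm},x_2^{\pm}]\}$ with $(x_1^{i_1}x_2^{i_2}\partial_s) \cdot (x_1^{j_1}x_2^{j_2}\partial_t) = \delta_{s,1}x_1^{i_1+j_1+1}x_2^{i_2+j_2}\partial_t + \delta_{s,2}x_1^{i_1+j_1}x_2^{i_2+j_2+1}\partial_t$. Then the bracket $[a_1 \otimes p_1, a_2 \otimes p_2] = a_1 \diamond a_2 \otimes p_1 \cdot p_2 - a_2 \diamond a_1 \otimes p_2 \cdot p_1$ defines a Lie algebra structure on $A \otimes P$ if and only if $(A, \diamond)$ is a pre-Lie algebra. -/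
/-!
For any perm algebra `P` and any bilinear `⋄`, a short computation shows that the Jacobiator of
`a ⊗ p, b ⊗ q, c ⊗ r` in `A ⊗ P` is the cyclic sum of `((a, b, c) - (b, a, c)) ⊗ p(qr)`, where
`(a, b, c) = (a ⋄ b) ⋄ c - a ⋄ (b ⋄ c)`: in a perm algebra a product of `p, q, r` in any order
and bracketing depends only on its last factor. So a pre-Lie `⋄` gives a Lie bracket
(skew-symmetry is automatic). Conversely, for `p = q = ∂₁` and `r = ∂₂` the product
`p(qr) = x₁²∂₂` differs from `q(rp) = r(pq) = x₁x₂∂₁`, so the Jacobi identity forces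
`(a, b, c) = (b, a, c)`.
-/

open TensorProduct

section PreLiePerm

variable {R A P : Type*} [CommRing R] [AddCommGroup A] [Module R A] [AddCommGroup P] [Module R P]

def LinearMap.associator_s6 (dia : A →ₗ[R] A →ₗ[R] A) (a b c : A) : A :=
  dia (dia a b) c - dia a (dia b c)

structure IsPerm (mul : P →ₗ[R] P →ₗ[R] P) : Prop where
  assoc : ∀ p q r, mul (mul p q) r = mul p (mul q r)
  swap_left : ∀ p q r, mul (mul p q) r = mul (mul q p) r

theorem IsPerm.left_comm {mul : P →ₗ[R] P →ₗ[R] P} (h : IsPerm mul) (p q r : P) :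
    mul p (mul q r) = mul q (mul p r) := by
  rw [← h.assoc, h.swap_left, h.assoc]

end PreLiePerm

section Jacobiator

variable {R M : Type*} [CommRing R] [AddCommGroup M] [Module R M]

def jacobiator (B : M →ₗ[R] M →ₗ[R] M) (x y z : M) : M :=
  B (B x y) z + B (B y z) x + B (B z x) y

variable (B : M →ₗ[R] M →ₗ[R] M)

theorem jacobiator_cycle (x y z : M) : jacobiator B x y z = jacobiator B y z x := by
  unfold jacobiator; abel

theorem jacobiator_add_left (x x' y z : M) :
    jacobiator B (x + x') y z = jacobiator B x y z + jacobiator B x' y z := by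
  simp only [jacobiator, map_add, LinearMap.add_apply]; abel

theorem jacobiator_zero_left (y z : M) : jacobiator B 0 y z = 0 := by
  simp [jacobiator]

end Jacobiator

section TensorBracket

variable {R A P : Type*} [CommRing R] [AddCommGroup A] [Module R A] [AddCommGroup P] [Module R P]
  {dia : A →ₗ[R] A →ₗ[R] A} {mul : P →ₗ[R] P →ₗ[R] P}
  {B : A ⊗[R] P →ₗ[R] A ⊗[R] P →ₗ[R] A ⊗[R] P}

theorem jacobiator_eq_zero_of_tmul
    (h : ∀ a b c p q r, jacobiator B (a ⊗ₜ p) (b ⊗ₜ q) (c ⊗ₜ r) = 0) (x y z : A ⊗[R] P) :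
    jacobiator B x y z = 0 := by
  have induct : ∀ y z, (∀ a p, jacobiator B (a ⊗ₜ p) y z = 0) → ∀ x, jacobiator B x y z = 0 :=
    fun y z hpure x => by
      induction x using TensorProduct.induction_on with
      | zero => exact jacobiator_zero_left B y z
      | tmul a p => exact hpure a p
      | add x x' hx hx' => rw [jacobiator_add_left, hx, hx', add_zero]
  refine induct y z (fun a p => ?_) x
  rw [jacobiator_cycle]
  refine induct z _ (fun b q => ?_) y
  rw [jacobiator_cycle]
  refine induct _ _ (fun c r => ?_) z
  rw [jacobiator_cycle]
  exact h a b c p q r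

variable (hB : ∀ a₁ a₂ p₁ p₂, B (a₁ ⊗ₜ p₁) (a₂ ⊗ₜ p₂) =
  dia a₁ a₂ ⊗ₜ mul p₁ p₂ - dia a₂ a₁ ⊗ₜ mul p₂ p₁)
include hB

theorem bracket_add_bracket_swap (x y : A ⊗[R] P) : B x y + B y x = 0 := by
  suffices B + B.flip = 0 from by simpa using LinearMap.congr_fun₂ this x y
  refine TensorProduct.ext' fun a p => TensorProduct.ext' fun b q => ?_
  simp only [LinearMap.add_apply, LinearMap.flip_apply, hB, LinearMap.zero_apply]
  abel

theorem bracket_self (x : A ⊗[R] P) : B x x = 0 := by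
  induction x using TensorProduct.induction_on with
  | zero => simp
  | tmul a p => rw [hB, sub_self]
  | add x y hx hy =>
    simp only [map_add, LinearMap.add_apply, hx, hy, zero_add, add_zero]
    exact bracket_add_bracket_swap hB y x

theorem jacobiator_tmul (hP : IsPerm mul) (a b c : A) (p q r : P) :
    jacobiator B (a ⊗ₜ p) (b ⊗ₜ q) (c ⊗ₜ r) =
      (dia.associator_s6 a b c - dia.associator_s6 b a c) ⊗ₜ mul p (mul q r) +
      (dia.associator_s6 b c a - dia.associator_s6 c b a) ⊗ₜ mul q (mul r p) +
      (dia.associator_s6 c a b - dia.associator_s6 a c b) ⊗ₜ mul r (mul p q) := by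
  simp only [jacobiator, hB, map_sub, LinearMap.sub_apply, hP.assoc, LinearMap.associator_s6,
    sub_tmul]
  rw [hP.left_comm q p r, hP.left_comm r q p, hP.left_comm p r q]
  abel

end TensorBracket

theorem eq_zero_of_tmul_single_add_tmul_single {R A ι : Type*} [CommRing R] [AddCommGroup A]
    [Module R A] {i j : ι} (hij : i ≠ j) {a b : A}
    (h : a ⊗ₜ[R] Finsupp.single i (1 : R) + b ⊗ₜ[R] Finsupp.single j 1 = 0) : a = 0 := by
  classical
  have hi := congr($(congrArg (TensorProduct.finsuppScalarRight R R A ι) h) i)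
  simpa [Finsupp.single_eq_of_ne hij] using hi

theorem isPerm_of_mul_single {k : Type*} [CommRing k]
    {mul : ((ℤ × ℤ × Fin 2) →₀ k) →ₗ[k] ((ℤ × ℤ × Fin 2) →₀ k) →ₗ[k] ((ℤ × ℤ × Fin 2) →₀ k)}
    (hmul : ∀ (i₁ i₂ j₁ j₂ : ℤ) (s t : Fin 2),
      mul (Finsupp.single (i₁, i₂, s) 1) (Finsupp.single (j₁, j₂, t) 1) =
        if s = 0 then Finsupp.single (i₁ + j₁ + 1, i₂ + j₂, t) 1
        else Finsupp.single (i₁ + j₁, i₂ + j₂ + 1, t) 1) :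
    IsPerm mul := by
  have assoc : mul.compr₂ mul = (LinearMap.llcomp k _ _ _ ∘ₗ mul).compl₂ mul := by
    ext ⟨i₁, i₂, s⟩ ⟨j₁, j₂, t⟩ ⟨l₁, l₂, u⟩
    fin_cases s <;> fin_cases t <;>
      simp only [Fin.zero_eta, Fin.mk_one, Fin.isValue, LinearMap.coe_comp, Function.comp_apply,
        Finsupp.lsingle_apply, LinearMap.compr₂_apply, LinearMap.compl₂_apply,
        LinearMap.llcomp_apply, hmul, one_ne_zero, ↓reduceIte] <;>
      ring_nf
  have swap_left : mul.compr₂ mul = (mul.compr₂ mul).flip := by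
    ext ⟨i₁, i₂, s⟩ ⟨j₁, j₂, t⟩ ⟨l₁, l₂, u⟩
    fin_cases s <;> fin_cases t <;>
      simp only [Fin.zero_eta, Fin.mk_one, Fin.isValue, LinearMap.coe_comp, Function.comp_apply,
        Finsupp.lsingle_apply, LinearMap.compr₂_apply, LinearMap.flip_apply, hmul, one_ne_zero,
        ↓reduceIte] <;>
      ring_nf
  exact ⟨fun p q r => congr($assoc p q r), fun p q r => congr($swap_left p q r)⟩

theorem stmt6_general {k A : Type*} [Field k] [AddCommGroup A] [Module k A]
    (dia : A →ₗ[k] A →ₗ[k] A)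
    (mul : ((ℤ × ℤ × Fin 2) →₀ k) →ₗ[k] ((ℤ × ℤ × Fin 2) →₀ k) →ₗ[k] ((ℤ × ℤ × Fin 2) →₀ k))
    (hmul : ∀ (i₁ i₂ j₁ j₂ : ℤ) (s t : Fin 2),
      mul (Finsupp.single (i₁, i₂, s) 1) (Finsupp.single (j₁, j₂, t) 1) =
        if s = 0 then Finsupp.single (i₁ + j₁ + 1, i₂ + j₂, t) 1
        else Finsupp.single (i₁ + j₁, i₂ + j₂ + 1, t) 1)
    (B : (A ⊗[k] ((ℤ × ℤ × Fin 2) →₀ k)) →ₗ[k] (A ⊗[k] ((ℤ × ℤ × Fin 2) →₀ k)) →ₗ[k]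
      (A ⊗[k] ((ℤ × ℤ × Fin 2) →₀ k)))
    (hB : ∀ (a₁ a₂ : A) (p₁ p₂ : (ℤ × ℤ × Fin 2) →₀ k),
      B (a₁ ⊗ₜ[k] p₁) (a₂ ⊗ₜ[k] p₂) =
        (dia a₁ a₂) ⊗ₜ[k] (mul p₁ p₂) - (dia a₂ a₁) ⊗ₜ[k] (mul p₂ p₁)) :
    ((∀ x, B x x = 0) ∧ (∀ x y z, B (B x y) z + B (B y z) x + B (B z x) y = 0)) ↔
    (∀ a b c : A, dia (dia a b) c - dia a (dia b c) = dia (dia b a) c - dia b (dia a c)) := by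
  have hP := isPerm_of_mul_single hmul
  constructor
  · rintro ⟨-, hJ⟩ a b c
    have h := hJ (a ⊗ₜ Finsupp.single (0, 0, 0) 1) (b ⊗ₜ Finsupp.single (0, 0, 0) 1)
      (c ⊗ₜ Finsupp.single (0, 0, 1) 1)
    rw [← jacobiator, jacobiator_tmul hB hP] at h
    simp only [Fin.isValue, hmul, ↓reduceIte, add_zero, zero_add, Int.reduceAdd,
      one_ne_zero] at h
    rw [add_assoc, ← add_tmul] at h
    exact sub_eq_zero.mp (eq_zero_of_tmul_single_add_tmul_single (by decide) h)
  · intro hA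
    refine ⟨bracket_self hB, jacobiator_eq_zero_of_tmul fun a b c p q r => ?_⟩
    simp only [jacobiator_tmul hB hP, LinearMap.associator_s6, hA, sub_self, zero_tmul, add_zero]

/-- Let `A` be a vector space with a bilinear operation `dia`, and let `P` be the
`ℤ`-graded perm algebra on `{f₁∂₁ + f₂∂₂}` (free module on basis `(i₁,i₂,s) ↔ x₁^{i₁}x₂^{i₂}∂ₛ`)
with `(x₁^{i₁}x₂^{i₂}∂ₛ)·(x₁^{j₁}x₂^{j₂}∂ₜ) = δ_{s,1}x₁^{i₁+j₁+1}x₂^{i₂+j₂}∂ₜ +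
δ_{s,2}x₁^{i₁+j₁}x₂^{i₂+j₂+1}∂ₜ`. Then the bracket
`[a₁⊗p₁, a₂⊗p₂] = a₁⋄a₂ ⊗ p₁·p₂ - a₂⋄a₁ ⊗ p₂·p₁` defines a Lie algebra structure on
`A ⊗ P` if and only if `(A, ⋄)` is a pre-Lie algebra. -/
theorem stmt6 {k A : Type*} [Field k] [CharZero k] [AddCommGroup A] [Module k A]
    (dia : A →ₗ[k] A →ₗ[k] A)
    (mul : ((ℤ × ℤ × Fin 2) →₀ k) →ₗ[k] ((ℤ × ℤ × Fin 2) →₀ k) →ₗ[k] ((ℤ × ℤ × Fin 2) →₀ k))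
    (hmul : ∀ (i₁ i₂ j₁ j₂ : ℤ) (s t : Fin 2),
      mul (Finsupp.single (i₁, i₂, s) 1) (Finsupp.single (j₁, j₂, t) 1) =
        if s = 0 then Finsupp.single (i₁ + j₁ + 1, i₂ + j₂, t) 1
        else Finsupp.single (i₁ + j₁, i₂ + j₂ + 1, t) 1)
    (B : (A ⊗[k] ((ℤ × ℤ × Fin 2) →₀ k)) →ₗ[k] (A ⊗[k] ((ℤ × ℤ × Fin 2) →₀ k)) →ₗ[k]
      (A ⊗[k] ((ℤ × ℤ × Fin 2) →₀ k)))
    (hB : ∀ (a₁ a₂ : A) (p₁ p₂ : (ℤ × ℤ × Fin 2) →₀ k),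
      B (a₁ ⊗ₜ[k] p₁) (a₂ ⊗ₜ[k] p₂) =
        (dia a₁ a₂) ⊗ₜ[k] (mul p₁ p₂) - (dia a₂ a₁) ⊗ₜ[k] (mul p₂ p₁)) :
    ((∀ x, B x x = 0) ∧ (∀ x y z, B (B x y) z + B (B y z) x + B (B z x) y = 0)) ↔
    (∀ a b c : A, dia (dia a b) c - dia a (dia b c) = dia (dia b a) c - dia b (dia a c)) :=
  stmt6_general dia mul hmul B hB
end

section
/- Let $(P, \cdot)$ be a perm algebra and $(V, l, r)$ be a representation of $(P, \cdot)$. Then $(V^*, l^*, l^* - r^*)$ is a representation of $(P, \cdot)$, where for $\rho: P \to \mathrm{End}(V)$ the dual map $\rho^*: P \to \mathrm{End}(V^*)$ is defined by $\langle \rho^*(p) v^*, v \rangle = \langle v^*, \rho(p) v \rangle$. -/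
/-- If `(V, l, r)` is a representation of a perm algebra `(P, ·)`, then
`(V*, l*, l* - r*)` is also a representation of `(P, ·)`, where `⟨ρ*(p)v*, v⟩ = ⟨v*, ρ(p)v⟩`
(i.e. `ρ*(p) = (ρ p).dualMap`). -/
theorem stmt9 {k P V : Type*} [Field k] [AddCommGroup P] [Module k P]
    [AddCommGroup V] [Module k V]
    (mul : P →ₗ[k] P →ₗ[k] P)
    (hperm1 : ∀ p q r : P, mul p (mul q r) = mul (mul p q) r)
    (hperm2 : ∀ p q r : P, mul (mul p q) r = mul (mul q p) r)
    (l r : P →ₗ[k] (V →ₗ[k] V))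
    (hl : ∀ p q : P, l (mul p q) = l p ∘ₗ l q ∧ l p ∘ₗ l q = l q ∘ₗ l p)
    (hr : ∀ p q : P, r (mul p q) = r q ∘ₗ r p ∧ r q ∘ₗ r p = r q ∘ₗ l p ∧
      r q ∘ₗ l p = l p ∘ₗ r q) :
    (∀ p q : P, (l (mul p q)).dualMap = (l p).dualMap ∘ₗ (l q).dualMap ∧
      (l p).dualMap ∘ₗ (l q).dualMap = (l q).dualMap ∘ₗ (l p).dualMap) ∧
    (∀ p q : P,
      (l (mul p q)).dualMap - (r (mul p q)).dualMap =
        ((l q).dualMap - (r q).dualMap) ∘ₗ ((l p).dualMap - (r p).dualMap) ∧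
      ((l q).dualMap - (r q).dualMap) ∘ₗ ((l p).dualMap - (r p).dualMap) =
        ((l q).dualMap - (r q).dualMap) ∘ₗ (l p).dualMap ∧
      ((l q).dualMap - (r q).dualMap) ∘ₗ (l p).dualMap =
        (l p).dualMap ∘ₗ ((l q).dualMap - (r q).dualMap)) := by
  -- pointwise consequences of the hypotheses
  have h1 : ∀ p q : P, ∀ v : V, l (mul p q) v = l p (l q v) := by
    intro p q v; rw [(hl p q).1]; rfl
  have h2 : ∀ p q : P, ∀ v : V, l p (l q v) = l q (l p v) := by
    intro p q v
    have := (hl p q).2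
    calc l p (l q v) = (l p ∘ₗ l q) v := rfl
      _ = (l q ∘ₗ l p) v := by rw [this]
      _ = l q (l p v) := rfl
  have h3 : ∀ p q : P, ∀ v : V, r (mul p q) v = r q (r p v) := by
    intro p q v; rw [(hr p q).1]; rfl
  have h4 : ∀ p q : P, ∀ v : V, r q (r p v) = r q (l p v) := by
    intro p q v
    have := (hr p q).2.1
    calc r q (r p v) = (r q ∘ₗ r p) v := rfl
      _ = (r q ∘ₗ l p) v := by rw [this]
      _ = r q (l p v) := rfl
  have h5 : ∀ p q : P, ∀ v : V, r q (l p v) = l p (r q v) := by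
    intro p q v
    have := (hr p q).2.2
    calc r q (l p v) = (r q ∘ₗ l p) v := rfl
      _ = (l p ∘ₗ r q) v := by rw [this]
      _ = l p (r q v) := rfl
  refine ⟨fun p q => ⟨?_, ?_⟩, fun p q => ⟨?_, ?_, ?_⟩⟩
  · ext φ v
    simp [LinearMap.dualMap_apply, h1, h2]
  · ext φ v
    simp [LinearMap.dualMap_apply, h2]
  · ext φ v
    simp only [LinearMap.sub_apply, LinearMap.comp_apply, LinearMap.dualMap_apply,
      map_sub, LinearMap.dualMap_apply']
    rw [h1, h3 p q, h4 p q, ← h5 p q, h4 q p]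
    ring
  · ext φ v
    simp only [LinearMap.sub_apply, LinearMap.comp_apply, LinearMap.dualMap_apply,
      map_sub, LinearMap.dualMap_apply']
    rw [h4 q p]
    ring
  · ext φ v
    simp only [LinearMap.sub_apply, LinearMap.comp_apply, LinearMap.dualMap_apply,
      map_sub, LinearMap.dualMap_apply']
    rw [h2, h5 p q]
end

section
/- Let $(P_1, \cdot)$ and $(P_2, \circ)$ be perm algebras, and let $(P_2, l_{P_1}, r_{P_1})$ and $(P_1, l_{P_2}, r_{P_2})$ be representations of $(P_1, \cdot)$ and $(P_2, \circ)$ respectively, satisfying the ten matched-pair compatibility conditions (equations (3.5)-(3.14) of the paper). Then the operation $(p_1 + p_2) \star (p_1' + p_2') = (p_1 \cdot p_1' + l_{P_2}(p_2)p_1' + r_{P_2}(p_2')p_1) + (p_2 \circ p_2' + l_{P_1}(p_1)p_2' + r_{P_1}(p_1')p_2)$ defines a perm algebra structure on $P_1 \oplus P_2$. -/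
/-- A matched pair of perm algebras: given perm algebras `(P₁,·)`, `(P₂,∘)`,
representations `(P₂, l₁, r₁)` of `P₁` and `(P₁, l₂, r₂)` of `P₂` satisfying the ten
compatibility conditions, the operation
`(p₁+p₂) ⋆ (p₁'+p₂') = (p₁·p₁' + l₂(p₂)p₁' + r₂(p₂')p₁) + (p₂∘p₂' + l₁(p₁)p₂' + r₁(p₁')p₂)`
makes `P₁ ⊕ P₂` a perm algebra. -/
theorem stmt10 {k P₁ P₂ : Type*} [Field k] [AddCommGroup P₁] [Module k P₁]
    [AddCommGroup P₂] [Module k P₂]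
    (mul : P₁ →ₗ[k] P₁ →ₗ[k] P₁) (circ : P₂ →ₗ[k] P₂ →ₗ[k] P₂)
    (hmul1 : ∀ p q r : P₁, mul p (mul q r) = mul (mul p q) r)
    (hmul2 : ∀ p q r : P₁, mul (mul p q) r = mul (mul q p) r)
    (hcirc1 : ∀ p q r : P₂, circ p (circ q r) = circ (circ p q) r)
    (hcirc2 : ∀ p q r : P₂, circ (circ p q) r = circ (circ q p) r)
    (l₁ r₁ : P₁ →ₗ[k] (P₂ →ₗ[k] P₂)) (l₂ r₂ : P₂ →ₗ[k] (P₁ →ₗ[k] P₁))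
    (hl₁ : ∀ p q : P₁, l₁ (mul p q) = l₁ p ∘ₗ l₁ q ∧ l₁ p ∘ₗ l₁ q = l₁ q ∘ₗ l₁ p)
    (hr₁ : ∀ p q : P₁, r₁ (mul p q) = r₁ q ∘ₗ r₁ p ∧ r₁ q ∘ₗ r₁ p = r₁ q ∘ₗ l₁ p ∧
      r₁ q ∘ₗ l₁ p = l₁ p ∘ₗ r₁ q)
    (hl₂ : ∀ p q : P₂, l₂ (circ p q) = l₂ p ∘ₗ l₂ q ∧ l₂ p ∘ₗ l₂ q = l₂ q ∘ₗ l₂ p)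
    (hr₂ : ∀ p q : P₂, r₂ (circ p q) = r₂ q ∘ₗ r₂ p ∧ r₂ q ∘ₗ r₂ p = r₂ q ∘ₗ l₂ p ∧
      r₂ q ∘ₗ l₂ p = l₂ p ∘ₗ r₂ q)
    (c1 : ∀ (p₁ : P₁) (p₂ p₂' : P₂),
      l₁ p₁ (circ p₂ p₂') = circ (l₁ p₁ p₂) p₂' + l₁ (r₂ p₂ p₁) p₂')
    (c2 : ∀ (p₁ : P₁) (p₂ p₂' : P₂),
      r₁ p₁ (circ p₂ p₂') = circ p₂ (r₁ p₁ p₂') + r₁ (l₂ p₂' p₁) p₂)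
    (c3 : ∀ (p₂ : P₂) (p₁ p₁' : P₁),
      l₂ p₂ (mul p₁ p₁') = mul (l₂ p₂ p₁) p₁' + l₂ (r₁ p₁ p₂) p₁')
    (c4 : ∀ (p₂ : P₂) (p₁ p₁' : P₁),
      r₂ p₂ (mul p₁ p₁') = mul p₁ (r₂ p₂ p₁') + r₂ (l₁ p₁' p₂) p₁)
    (c5 : ∀ (p₁ : P₁) (p₂ p₂' : P₂),
      circ (r₁ p₁ p₂) p₂' + l₁ (l₂ p₂ p₁) p₂' = circ p₂ (l₁ p₁ p₂') + r₁ (r₂ p₂' p₁) p₂)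
    (c6 : ∀ (p₂ : P₂) (p₁ p₁' : P₁),
      mul (r₂ p₂ p₁) p₁' + l₂ (l₁ p₁ p₂) p₁' = mul p₁ (l₂ p₂ p₁') + r₂ (r₁ p₁' p₂) p₁)
    (c7 : ∀ (p₁ : P₁) (p₂ p₂' : P₂),
      circ (l₁ p₁ p₂) p₂' + l₁ (r₂ p₂ p₁) p₂' = circ (r₁ p₁ p₂) p₂' + l₁ (l₂ p₂ p₁) p₂')
    (c8 : ∀ (p₂ : P₂) (p₁ p₁' : P₁),
      mul (l₂ p₂ p₁) p₁' + l₂ (r₁ p₁ p₂) p₁' = mul (r₂ p₂ p₁) p₁' + l₂ (l₁ p₁ p₂) p₁')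
    (c9 : ∀ (p₁ : P₁) (p₂ p₂' : P₂), r₁ p₁ (circ p₂ p₂') = r₁ p₁ (circ p₂' p₂))
    (c10 : ∀ (p₂ : P₂) (p₁ p₁' : P₁), r₂ p₂ (mul p₁ p₁') = r₂ p₂ (mul p₁' p₁))
    (star : (P₁ × P₂) → (P₁ × P₂) → (P₁ × P₂))
    (hstar : ∀ x y : P₁ × P₂, star x y =
      (mul x.1 y.1 + l₂ x.2 y.1 + r₂ y.2 x.1, circ x.2 y.2 + l₁ x.1 y.2 + r₁ y.1 x.2)) :
    ∀ x y z : P₁ × P₂, star x (star y z) = star (star x y) z ∧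
      star (star x y) z = star (star y x) z := by

  intro x y z
  obtain ⟨a, α⟩ := x
  obtain ⟨b, β⟩ := y
  obtain ⟨c, γ⟩ := z
  simp only [hstar, map_add, LinearMap.add_apply]
  refine ⟨Prod.ext ?_ ?_, Prod.ext ?_ ?_⟩
  · -- assoc, first component
    have e1 : l₂ (circ α β) c = l₂ α (l₂ β c) := LinearMap.congr_fun (hl₂ α β).1 c
    have e2 : r₂ (circ β γ) a = r₂ γ (r₂ β a) := LinearMap.congr_fun (hr₂ β γ).1 a
    have e3 : r₂ γ (l₂ α b) = l₂ α (r₂ γ b) := LinearMap.congr_fun (hr₂ α γ).2.2 b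
    linear_combination (norm := module) hmul1 a b c - e1 + e2 - e3 + c3 α b c -
      c4 γ a b - c6 β a c
  · -- assoc, second component
    have e1 : l₁ (mul a b) γ = l₁ a (l₁ b γ) := LinearMap.congr_fun (hl₁ a b).1 γ
    have e2 : r₁ (mul b c) α = r₁ c (r₁ b α) := LinearMap.congr_fun (hr₁ b c).1 α
    have e3 : r₁ c (l₁ a β) = l₁ a (r₁ c β) := LinearMap.congr_fun (hr₁ a c).2.2 β
    linear_combination (norm := module) hcirc1 α β γ - e1 + e2 - e3 + c1 a β γ -
      c2 c α β - c5 b α γ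
  · -- left-comm, first component
    have e1 : l₂ (circ α β) c = l₂ (circ β α) c :=
      LinearMap.congr_fun (((hl₂ α β).1.trans (hl₂ α β).2).trans (hl₂ β α).1.symm) c
    have e2 : r₂ γ (r₂ α b) = r₂ γ (l₂ α b) := LinearMap.congr_fun (hr₂ α γ).2.1 b
    have e3 : r₂ γ (r₂ β a) = r₂ γ (l₂ β a) := LinearMap.congr_fun (hr₂ β γ).2.1 a
    linear_combination (norm := module) hmul2 a b c + e1 - e2 + e3 + c10 γ a b +
      c8 α b c - c8 β a c
  · -- left-comm, second component
    have e1 : l₁ (mul a b) γ = l₁ (mul b a) γ :=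
      LinearMap.congr_fun (((hl₁ a b).1.trans (hl₁ a b).2).trans (hl₁ b a).1.symm) γ
    have e2 : r₁ c (r₁ a β) = r₁ c (l₁ a β) := LinearMap.congr_fun (hr₁ a c).2.1 β
    have e3 : r₁ c (r₁ b α) = r₁ c (l₁ b α) := LinearMap.congr_fun (hr₁ b c).2.1 α
    linear_combination (norm := module) hcirc2 α β γ + e1 - e2 + e3 + c9 c α β +
      c7 a β γ - c7 b α γ
end

section
/- Let $(P, \cdot)$ be a perm algebra and $r \in P \otimes P$. Define $\Delta_P(p) = (\mathrm{id} \otimes R_\cdot(p) - (L_\cdot - R_\cdot)(p) \otimes \mathrm{id})(r)$. Then the cocycle identity $\Delta_P(p \cdot q) = ((L_\cdot - R_\cdot)(p) \otimes \mathrm{id})\Delta_P(q) + (\mathrm{id} \otimes R_\cdot(q))\Delta_P(p)$ holds automatically for all $p, q \in P$. -/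
open TensorProduct

/-- Let `(P,·)` be a perm algebra and `r ∈ P ⊗ P`. For
`Δ(p) = (id ⊗ R(p) - (L-R)(p) ⊗ id)(r)` (where `L(p)q = p·q`, `R(p)q = q·p`), the cocycle
identity `Δ(p·q) = ((L-R)(p) ⊗ id)Δ(q) + (id ⊗ R(q))Δ(p)` holds automatically. -/
theorem stmt11 {k P : Type*} [Field k] [AddCommGroup P] [Module k P]
    (mul : P →ₗ[k] P →ₗ[k] P)
    (hperm1 : ∀ p q r : P, mul p (mul q r) = mul (mul p q) r)
    (hperm2 : ∀ p q r : P, mul (mul p q) r = mul (mul q p) r)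
    (r : P ⊗[k] P)
    (Δ : P → P ⊗[k] P)
    (hΔ : ∀ p : P, Δ p = TensorProduct.map LinearMap.id (mul.flip p) r -
      TensorProduct.map (mul p - mul.flip p) LinearMap.id r) :
    ∀ p q : P, Δ (mul p q) =
      TensorProduct.map (mul p - mul.flip p) LinearMap.id (Δ q) +
        TensorProduct.map LinearMap.id (mul.flip q) (Δ p) := by
  intro p q
  simp only [hΔ, map_sub]
  clear hΔ Δ
  induction r using TensorProduct.induction_on with
  | zero => simp
  | tmul a b =>
    simp only [TensorProduct.map_tmul, LinearMap.sub_apply, LinearMap.id_coe, id_eq,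
      LinearMap.flip_apply, map_sub, TensorProduct.sub_tmul, TensorProduct.tmul_sub]
    have h1 : mul b (mul p q) = mul (mul b p) q := hperm1 b p q
    have h2 : mul (mul p q) a = mul p (mul q a) := (hperm1 p q a).symm
    have h3 : mul a (mul p q) = mul p (mul a q) := by
      rw [hperm1 a p q, hperm2 a p q, ← hperm1 p a q]
    have h4 : mul (mul q a) p = mul (mul a q) p := hperm2 q a p
    rw [h1, h2, h3, h4]
    abel
  | add x y hx hy =>
    simp only [map_add, add_sub_add_comm]
    rw [hx, hy]
    abel
end

section
/- Let $(P, \cdot)$ be a perm algebra and $r \in P \otimes P$ be symmetric (i.e., $\sigma(r) = r$). Then $r$ is a solution of the perm Yang-Baxter equation $r_{12} \cdot r_{23} - r_{13} \cdot r_{23} + r_{12} \cdot r_{13} - r_{13} \cdot r_{12} = 0$ if and only if the induced map $r^\sharp: P^* \to P$ satisfies $r^\sharp(p^*) \cdot r^\sharp(q^*) = r^\sharp(L_\cdot^*(r^\sharp(p^*))q^* + (L_\cdot^* - R_\cdot^*)(r^\sharp(q^*))p^*)$ for all $p^*, q^* \in P^*$. -/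
open TensorProduct

/-- The map `r♯ : P* → P` induced by `r ∈ P ⊗ P`: for `r = ∑ pₐ ⊗ qₐ`,
`r♯(f) = ∑ f(pₐ) • qₐ`. -/
noncomputable def rSharp {k P : Type*} [Field k] [AddCommGroup P] [Module k P]
    (r : P ⊗[k] P) (f : Module.Dual k P) : P :=
  TensorProduct.lift (f.smulRight (LinearMap.id : P →ₗ[k] P)) r

lemma rep_lemma {k P M : Type*} [Field k] [AddCommGroup P] [Module k P]
    [FiniteDimensional k P] [AddCommGroup M] [Module k M] (x : P ⊗[k] M) :
    x = ∑ i, (Module.finBasis k P) i ⊗ₜ[k]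
      (TensorProduct.lift (((Module.finBasis k P).coord i).smulRight
        (LinearMap.id : M →ₗ[k] M)) x) := by
  classical
  set b := Module.finBasis k P with hb
  induction x using TensorProduct.induction_on with
  | zero => simp
  | tmul p m =>
    simp only [TensorProduct.lift.tmul, LinearMap.smulRight_apply, LinearMap.id_apply,
      LinearMap.smul_apply]
    have h1 : ∀ i : Fin (Module.finrank k P),
        b i ⊗ₜ[k] ((b.coord i) p • m) = ((b.repr p i) • b i) ⊗ₜ[k] m := by
      intro i
      rw [TensorProduct.tmul_smul, TensorProduct.smul_tmul']
      rfl
    rw [Finset.sum_congr rfl (fun i _ => h1 i), ← TensorProduct.sum_tmul, Module.Basis.sum_repr]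
  | add y z hy hz =>
    simp only [map_add, TensorProduct.tmul_add, Finset.sum_add_distrib]
    rw [← hy, ← hz]

lemma key_lemma {k P M : Type*} [Field k] [AddCommGroup P] [Module k P]
    [FiniteDimensional k P] [AddCommGroup M] [Module k M] (x : P ⊗[k] M)
    (h : ∀ f : Module.Dual k P,
      TensorProduct.lift (f.smulRight (LinearMap.id : M →ₗ[k] M)) x = 0) : x = 0 := by
  rw [rep_lemma x]
  simp [h]

noncomputable def Rs {k P : Type*} [Field k] [AddCommGroup P] [Module k P] :
    (P ⊗[k] P) →ₗ[k] Module.Dual k P →ₗ[k] P :=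
  LinearMap.flip
  { toFun := fun f => TensorProduct.lift (f.smulRight (LinearMap.id : P →ₗ[k] P))
    map_add' := by
      intro f g; apply TensorProduct.ext'; intro p q; simp [add_smul]
    map_smul' := by
      intro c f; apply TensorProduct.ext'; intro p q; simp [smul_smul] }

lemma Rs_apply {k P : Type*} [Field k] [AddCommGroup P] [Module k P]
    (x : P ⊗[k] P) (f : Module.Dual k P) :
    Rs x f = TensorProduct.lift (f.smulRight (LinearMap.id : P →ₗ[k] P)) x := rfl

lemma Rs_tmul {k P : Type*} [Field k] [AddCommGroup P] [Module k P]
    (p q : P) (f : Module.Dual k P) : Rs (p ⊗ₜ[k] q) f = f p • q := by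
  rw [Rs_apply]; simp

section terms
variable {k P : Type*} [Field k] [AddCommGroup P] [Module k P]
  (mul : P →ₗ[k] P →ₗ[k] P)
  (T : (P ⊗[k] P) →ₗ[k] (P ⊗[k] P) →ₗ[k] (P ⊗[k] (P ⊗[k] P)))
  (f g : Module.Dual k P)

noncomputable def psi (f : Module.Dual k P) : (P ⊗[k] (P ⊗[k] P)) →ₗ[k] (P ⊗[k] P) :=
  TensorProduct.lift (f.smulRight (LinearMap.id : (P ⊗[k] P) →ₗ[k] (P ⊗[k] P)))

lemma psi_tmul (p : P) (m : P ⊗[k] P) : psi f (p ⊗ₜ[k] m) = f p • m := by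
  simp [psi]

lemma termA (hT : ∀ p q p' q' : P,
      T (p ⊗ₜ[k] q) (p' ⊗ₜ[k] q') = p ⊗ₜ[k] ((mul q p') ⊗ₜ[k] q')) :
    ∀ x y : P ⊗[k] P, Rs (psi f (T x y)) g = Rs y ((mul (Rs x f)).dualMap g) := by
  intro x y
  induction x using TensorProduct.induction_on with
  | zero => simp [LinearMap.dualMap_apply']
  | tmul p q =>
    induction y using TensorProduct.induction_on with
    | zero => simp
    | tmul p' q' =>
      rw [hT]
      simp [psi_tmul, Rs_tmul, LinearMap.dualMap_apply, smul_smul, mul_comm]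
    | add a b ha hb => simp_all [map_add]
  | add a b ha hb => simp_all [map_add, LinearMap.add_apply, LinearMap.dualMap_apply',
      LinearMap.comp_add, LinearMap.add_comp]

lemma termB (hT : ∀ p q p' q' : P,
      T (p ⊗ₜ[k] q) (p' ⊗ₜ[k] q') = p ⊗ₜ[k] (p' ⊗ₜ[k] (mul q q'))) :
    ∀ x y : P ⊗[k] P, Rs (psi f (T x y)) g = mul (Rs x f) (Rs y g) := by
  intro x y
  induction x using TensorProduct.induction_on with
  | zero => simp
  | tmul p q =>
    induction y using TensorProduct.induction_on with
    | zero => simp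
    | tmul p' q' =>
      rw [hT]
      simp [psi_tmul, Rs_tmul, smul_smul, mul_comm]
    | add a b ha hb => simp_all [map_add]
  | add a b ha hb => simp_all [map_add, LinearMap.add_apply]

lemma termC (hT : ∀ p q p' q' : P,
      T (p ⊗ₜ[k] q) (p' ⊗ₜ[k] q') = (mul p p') ⊗ₜ[k] (q ⊗ₜ[k] q')) :
    ∀ x y : P ⊗[k] P,
      Rs (psi f (T x y)) g
        = Rs y ((mul (Rs (TensorProduct.comm k P P x) g)).dualMap f) := by
  intro x y
  induction x using TensorProduct.induction_on with
  | zero => simp [LinearMap.dualMap_apply']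
  | tmul p q =>
    induction y using TensorProduct.induction_on with
    | zero => simp
    | tmul p' q' =>
      rw [hT]
      simp [psi_tmul, Rs_tmul, LinearMap.dualMap_apply, smul_smul, mul_comm]
    | add a b ha hb => simp_all [map_add]
  | add a b ha hb => simp_all [map_add, LinearMap.add_apply, LinearMap.dualMap_apply',
      LinearMap.comp_add, LinearMap.add_comp]

lemma termD (hT : ∀ p q p' q' : P,
      T (p ⊗ₜ[k] q) (p' ⊗ₜ[k] q') = (mul p p') ⊗ₜ[k] (q' ⊗ₜ[k] q)) :
    ∀ x y : P ⊗[k] P,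
      Rs (psi f (T x y)) g
        = Rs x ((mul.flip (Rs (TensorProduct.comm k P P y) g)).dualMap f) := by
  intro x y
  induction x using TensorProduct.induction_on with
  | zero => simp
  | tmul p q =>
    induction y using TensorProduct.induction_on with
    | zero => simp [LinearMap.dualMap_apply']
    | tmul p' q' =>
      rw [hT]
      simp [psi_tmul, Rs_tmul, LinearMap.dualMap_apply, smul_smul, mul_comm]
    | add a b ha hb => simp_all [map_add, LinearMap.add_apply, LinearMap.dualMap_apply',
        LinearMap.comp_add, LinearMap.add_comp]
  | add a b ha hb => simp_all [map_add, LinearMap.add_apply]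
end terms

/-- Let `(P,·)` be a finite-dimensional perm algebra and `r ∈ P ⊗ P` symmetric.
Then `r` satisfies the perm Yang-Baxter equation
`r₁₂·r₂₃ - r₁₃·r₂₃ + r₁₂·r₁₃ - r₁₃·r₁₂ = 0` if and only if
`r♯(f)·r♯(g) = r♯(L*(r♯(f))g + (L* - R*)(r♯(g))f)` for all `f, g ∈ P*`.
The four products of copies of `r` are encoded by the (unique) bilinear maps
`T₁₂₂₃, T₁₃₂₃, T₁₂₁₃, T₁₃₁₂` determined by their values on pure tensors. -/
theorem stmt12 {k P : Type*} [Field k] [AddCommGroup P] [Module k P] [FiniteDimensional k P]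
    (mul : P →ₗ[k] P →ₗ[k] P)
    (hperm1 : ∀ p q r : P, mul p (mul q r) = mul (mul p q) r)
    (hperm2 : ∀ p q r : P, mul (mul p q) r = mul (mul q p) r)
    (r : P ⊗[k] P)
    (hsym : TensorProduct.comm k P P r = r)
    (T1223 T1323 T1213 T1312 :
      (P ⊗[k] P) →ₗ[k] (P ⊗[k] P) →ₗ[k] (P ⊗[k] (P ⊗[k] P)))
    (hT1223 : ∀ p q p' q' : P,
      T1223 (p ⊗ₜ[k] q) (p' ⊗ₜ[k] q') = p ⊗ₜ[k] ((mul q p') ⊗ₜ[k] q'))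
    (hT1323 : ∀ p q p' q' : P,
      T1323 (p ⊗ₜ[k] q) (p' ⊗ₜ[k] q') = p ⊗ₜ[k] (p' ⊗ₜ[k] (mul q q')))
    (hT1213 : ∀ p q p' q' : P,
      T1213 (p ⊗ₜ[k] q) (p' ⊗ₜ[k] q') = (mul p p') ⊗ₜ[k] (q ⊗ₜ[k] q'))
    (hT1312 : ∀ p q p' q' : P,
      T1312 (p ⊗ₜ[k] q) (p' ⊗ₜ[k] q') = (mul p p') ⊗ₜ[k] (q' ⊗ₜ[k] q)) :
    (T1223 r r - T1323 r r + T1213 r r - T1312 r r = 0) ↔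
    (∀ f g : Module.Dual k P,
      mul (rSharp r f) (rSharp r g) =
        rSharp r ((mul (rSharp r f)).dualMap g +
          ((mul (rSharp r g)).dualMap - (mul.flip (rSharp r g)).dualMap) f)) := by
  have hrs : ∀ (x : P ⊗[k] P) (f : Module.Dual k P), rSharp x f = Rs x f := fun _ _ => rfl
  set T : P ⊗[k] (P ⊗[k] P) := T1223 r r - T1323 r r + T1213 r r - T1312 r r with hT
  have hkey : ∀ f g : Module.Dual k P,
      Rs (psi f T) g =
        Rs r ((mul (Rs r f)).dualMap g +
          ((mul (Rs r g)).dualMap - (mul.flip (Rs r g)).dualMap) f)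
        - mul (Rs r f) (Rs r g) := by
    intro f g
    have hA := termA mul T1223 f g hT1223 r r
    have hB := termB mul T1323 f g hT1323 r r
    have hC := termC mul T1213 f g hT1213 r r
    have hD := termD mul T1312 f g hT1312 r r
    rw [hsym] at hC hD
    rw [hT]
    simp only [map_sub, map_add, LinearMap.sub_apply, LinearMap.add_apply,
      hA, hB, hC, hD]
    abel
  constructor
  · intro h0 f g
    have := hkey f g
    rw [h0] at this
    simp only [map_zero, LinearMap.zero_apply] at this
    simp only [hrs]
    exact (sub_eq_zero.mp this.symm).symm
  · intro hid
    have hz : ∀ f g : Module.Dual k P, Rs (psi f T) g = 0 := by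
      intro f g
      simp only [hrs] at hid
      rw [hkey f g, ← hid f g]
      exact sub_self _
    have hpsi : ∀ f : Module.Dual k P, psi f T = 0 := by
      intro f
      apply key_lemma
      intro g
      have := hz f g
      rwa [Rs_apply] at this
    apply key_lemma
    intro f
    exact hpsi f
end

section
/- Let $(P, \lhd, \rhd)$ be a pre-perm algebra. Then the operation $p \cdot q = p \lhd q + p \rhd q$ defines a perm algebra structure on $P$; moreover, $(P, L_\rhd, R_\lhd)$ is a representation of $(P, \cdot)$, and the identity map is an $\mathcal{O}$-operator of $(P, \cdot)$ associated to $(P, L_\rhd, R_\lhd)$. -/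
/-- For a pre-perm algebra `(P, ⊲, ⊳)`, the operation `p·q = p⊲q + p⊳q`
(i.e. the bilinear map `lhd + rhd`) is a perm algebra, `(P, L_⊳, R_⊲)` is a representation
of `(P,·)` (with `L_⊳(p) = rhd p` and `R_⊲(p) = lhd.flip p`), and the identity map is an
`𝒪`-operator of `(P,·)` associated to `(P, L_⊳, R_⊲)`. -/
theorem stmt13 {k P : Type*} [Field k] [AddCommGroup P] [Module k P]
    (lhd rhd : P →ₗ[k] P →ₗ[k] P)
    (h1 : ∀ p₁ p₂ p₃ : P, lhd p₁ (lhd p₂ p₃ + rhd p₂ p₃) = lhd (lhd p₁ p₂) p₃)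
    (h2 : ∀ p₁ p₂ p₃ : P, lhd (lhd p₁ p₂) p₃ = lhd (rhd p₂ p₁) p₃)
    (h3 : ∀ p₁ p₂ p₃ : P, lhd (rhd p₂ p₁) p₃ = rhd p₂ (lhd p₁ p₃))
    (h4 : ∀ p₁ p₂ p₃ : P, rhd (lhd p₁ p₂ + rhd p₁ p₂) p₃ = rhd p₁ (rhd p₂ p₃))
    (h5 : ∀ p₁ p₂ p₃ : P, rhd p₁ (rhd p₂ p₃) = rhd p₂ (rhd p₁ p₃)) :
    (∀ p q r : P, (lhd + rhd) p ((lhd + rhd) q r) = (lhd + rhd) ((lhd + rhd) p q) r ∧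
      (lhd + rhd) ((lhd + rhd) p q) r = (lhd + rhd) ((lhd + rhd) q p) r) ∧
    (∀ p q : P, rhd ((lhd + rhd) p q) = rhd p ∘ₗ rhd q ∧ rhd p ∘ₗ rhd q = rhd q ∘ₗ rhd p) ∧
    (∀ p q : P, lhd.flip ((lhd + rhd) p q) = lhd.flip q ∘ₗ lhd.flip p ∧
      lhd.flip q ∘ₗ lhd.flip p = lhd.flip q ∘ₗ rhd p ∧
      lhd.flip q ∘ₗ rhd p = rhd p ∘ₗ lhd.flip q) ∧
    (∀ u v : P, (lhd + rhd) u v = rhd u v + lhd.flip v u) := by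
  refine ⟨fun p q r => ⟨?_, ?_⟩, fun p q => ⟨?_, ?_⟩, fun p q => ⟨?_, ?_, ?_⟩, fun u v => ?_⟩
  · simp only [LinearMap.add_apply]
    rw [h1, h4, map_add (rhd p), map_add lhd, LinearMap.add_apply, ← h3 q p r]
    abel
  · simp only [LinearMap.add_apply]
    rw [h4, h4, map_add lhd, map_add lhd, LinearMap.add_apply, LinearMap.add_apply,
      h2 p q r, ← h2 q p r, h5 p q r]
    abel
  · ext x
    simpa only [LinearMap.add_apply, LinearMap.comp_apply] using h4 p q x
  · ext x
    simpa only [LinearMap.comp_apply] using h5 p q x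
  · ext x
    simpa only [LinearMap.add_apply, LinearMap.comp_apply, LinearMap.flip_apply] using h1 x p q
  · ext x
    simpa only [LinearMap.comp_apply, LinearMap.flip_apply] using h2 x p q
  · ext x
    simpa only [LinearMap.comp_apply, LinearMap.flip_apply] using h3 x p q
  · simp only [LinearMap.add_apply, LinearMap.flip_apply]
    abel
end

section
/- Let $T: V \to P$ be an $\mathcal{O}$-operator of a perm algebra $(P, \cdot)$ associated to a representation $(V, l, r)$. Then $V$ carries a pre-perm algebra structure $(V, \lhd, \rhd)$ with $u \rhd v = l(T(u))v$ and $u \lhd v = r(T(v))u$. -/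
/-- If `T : V → P` is an `𝒪`-operator of a perm algebra `(P,·)` associated to a
representation `(V, l, r)`, then `u ⊳ v = l(T u)v` and `u ⊲ v = r(T v)u` make `V` a
pre-perm algebra. -/
theorem stmt14 {k P V : Type*} [Field k] [AddCommGroup P] [Module k P]
    [AddCommGroup V] [Module k V]
    (mul : P →ₗ[k] P →ₗ[k] P)
    (hperm1 : ∀ p q r : P, mul p (mul q r) = mul (mul p q) r)
    (hperm2 : ∀ p q r : P, mul (mul p q) r = mul (mul q p) r)
    (l r : P →ₗ[k] (V →ₗ[k] V))
    (hl : ∀ p q : P, l (mul p q) = l p ∘ₗ l q ∧ l p ∘ₗ l q = l q ∘ₗ l p)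
    (hr : ∀ p q : P, r (mul p q) = r q ∘ₗ r p ∧ r q ∘ₗ r p = r q ∘ₗ l p ∧
      r q ∘ₗ l p = l p ∘ₗ r q)
    (T : V →ₗ[k] P)
    (hT : ∀ u v : V, mul (T u) (T v) = T (l (T u) v + r (T v) u))
    (rhd lhd : V → V → V)
    (hrhd : ∀ u v : V, rhd u v = l (T u) v)
    (hlhd : ∀ u v : V, lhd u v = r (T v) u) :
    (∀ p₁ p₂ p₃ : V, lhd p₁ (lhd p₂ p₃ + rhd p₂ p₃) = lhd (lhd p₁ p₂) p₃) ∧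
    (∀ p₁ p₂ p₃ : V, lhd (lhd p₁ p₂) p₃ = lhd (rhd p₂ p₁) p₃) ∧
    (∀ p₁ p₂ p₃ : V, lhd (rhd p₂ p₁) p₃ = rhd p₂ (lhd p₁ p₃)) ∧
    (∀ p₁ p₂ p₃ : V, rhd (lhd p₁ p₂ + rhd p₁ p₂) p₃ = rhd p₁ (rhd p₂ p₃)) ∧
    (∀ p₁ p₂ p₃ : V, rhd p₁ (rhd p₂ p₃) = rhd p₂ (rhd p₁ p₃)) := by
  have key : ∀ u v : V, T (lhd u v + rhd u v) = mul (T u) (T v) := by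
    intro u v
    rw [hlhd, hrhd, add_comm, ← hT]
  refine ⟨?_, ?_, ?_, ?_, ?_⟩
  · intro p₁ p₂ p₃
    rw [hlhd p₁, key p₂ p₃, hlhd (lhd p₁ p₂) p₃, hlhd p₁ p₂, (hr (T p₂) (T p₃)).1]
    rfl
  · intro p₁ p₂ p₃
    rw [hlhd (lhd p₁ p₂) p₃, hlhd (rhd p₂ p₁) p₃, hlhd p₁ p₂, hrhd p₂ p₁]
    simpa using LinearMap.congr_fun (hr (T p₂) (T p₃)).2.1 p₁
  · intro p₁ p₂ p₃
    rw [hlhd (rhd p₂ p₁) p₃, hrhd p₂ (lhd p₁ p₃), hrhd p₂ p₁, hlhd p₁ p₃]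
    simpa using LinearMap.congr_fun (hr (T p₂) (T p₃)).2.2 p₁
  · intro p₁ p₂ p₃
    rw [hrhd (lhd p₁ p₂ + rhd p₁ p₂) p₃, key p₁ p₂, hrhd p₁, hrhd p₂ p₃, (hl (T p₁) (T p₂)).1]
    rfl
  · intro p₁ p₂ p₃
    rw [hrhd p₁, hrhd p₂ p₃, hrhd p₂, hrhd p₁ p₃]
    simpa using LinearMap.congr_fun (hl (T p₁) (T p₂)).2 p₃
end

section
/- Let $(P, \cdot, \kappa)$ be a quadratic perm algebra and $(A, \diamond, \omega)$ be a quadratic pre-Lie algebra, and let $(L = P \otimes A, [-,-])$ be the induced Lie algebra with $[p_1 \otimes a_1, p_2 \otimes a_2] = p_1 \cdot p_2 \otimes a_1 \diamond a_2 - p_2 \cdot p_1 \otimes a_2 \diamond a_1$. Then the bilinear form $\mathfrak{B}(p_1 \otimes a_1, p_2 \otimes a_2) = \kappa(p_1, p_2)\omega(a_1, a_2)$ is a symmetric nondegenerate invariant bilinear form on $(L, [-,-])$, i.e., $\mathfrak{B}([x,y],z) = \mathfrak{B}(x,[y,z])$. -/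
open TensorProduct

/-- Let `(P, ·, κ)` be a quadratic perm algebra and `(A, ⋄, ω)` a quadratic
pre-Lie algebra, and `L = P ⊗ A` the induced Lie algebra with
`[p₁⊗a₁, p₂⊗a₂] = p₁·p₂ ⊗ a₁⋄a₂ - p₂·p₁ ⊗ a₂⋄a₁`. Then the bilinear form
`𝔅(p₁⊗a₁, p₂⊗a₂) = κ(p₁,p₂)ω(a₁,a₂)` is symmetric, nondegenerate and invariant on `L`. -/
theorem stmt15 {k P A : Type*} [Field k]
    [AddCommGroup P] [Module k P] [AddCommGroup A] [Module k A]
    (mul : P →ₗ[k] P →ₗ[k] P)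
    (hperm1 : ∀ p q r : P, mul p (mul q r) = mul (mul p q) r)
    (hperm2 : ∀ p q r : P, mul (mul p q) r = mul (mul q p) r)
    (κ : P →ₗ[k] P →ₗ[k] k)
    (hκskew : ∀ p q : P, κ p q = -κ q p)
    (hκnd : ∀ p : P, (∀ q : P, κ p q = 0) → p = 0)
    (hκinv : ∀ p₁ p₂ p₃ : P, κ (mul p₁ p₂) p₃ = κ p₁ (mul p₂ p₃ - mul p₃ p₂))
    (dia : A →ₗ[k] A →ₗ[k] A)
    (hpre : ∀ a b c : A,
      dia (dia a b) c - dia a (dia b c) = dia (dia b a) c - dia b (dia a c))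
    (ω : A →ₗ[k] A →ₗ[k] k)
    (hωskew : ∀ a b : A, ω a b = -ω b a)
    (hωnd : ∀ a : A, (∀ b : A, ω a b = 0) → a = 0)
    (hωinv : ∀ a₁ a₂ a₃ : A, ω (dia a₁ a₂) a₃ = -ω a₂ (dia a₁ a₃ - dia a₃ a₁))
    (B : (P ⊗[k] A) →ₗ[k] (P ⊗[k] A) →ₗ[k] (P ⊗[k] A))
    (hB : ∀ (p₁ p₂ : P) (a₁ a₂ : A),
      B (p₁ ⊗ₜ[k] a₁) (p₂ ⊗ₜ[k] a₂) =
        (mul p₁ p₂) ⊗ₜ[k] (dia a₁ a₂) - (mul p₂ p₁) ⊗ₜ[k] (dia a₂ a₁))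
    (𝔅 : (P ⊗[k] A) →ₗ[k] (P ⊗[k] A) →ₗ[k] k)
    (h𝔅 : ∀ (p₁ p₂ : P) (a₁ a₂ : A),
      𝔅 (p₁ ⊗ₜ[k] a₁) (p₂ ⊗ₜ[k] a₂) = κ p₁ p₂ * ω a₁ a₂) :
    (∀ x y : P ⊗[k] A, 𝔅 x y = 𝔅 y x) ∧
    (∀ x : P ⊗[k] A, (∀ y : P ⊗[k] A, 𝔅 x y = 0) → x = 0) ∧
    (∀ x y z : P ⊗[k] A, 𝔅 (B x y) z = 𝔅 x (B y z)) := by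
  classical
  refine ⟨?_, ?_, ?_⟩
  · -- symmetry
    intro x y
    induction x using TensorProduct.induction_on with
    | zero => simp
    | tmul p a =>
      induction y using TensorProduct.induction_on with
      | zero => simp
      | tmul q b => rw [h𝔅, h𝔅, hκskew p q, hωskew a b]; ring
      | add u v hu hv => simp [map_add, hu, hv]
    | add u v hu hv => simp [map_add, hu, hv]
  · -- nondegeneracy
    set e := Module.Basis.ofVectorSpace k P with he
    set L : A → (P ⊗[k] A) →ₗ[k] P :=
      fun b => TensorProduct.lift (((LinearMap.lsmul k P).comp (ω.flip b)).flip) with hL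
    set M : Module.Basis.ofVectorSpaceIndex k P → (P ⊗[k] A) →ₗ[k] A :=
      fun j => TensorProduct.lift ((LinearMap.lsmul k A).comp (e.coord j)) with hM
    have hLtmul : ∀ (b : A) (p : P) (a : A), L b (p ⊗ₜ[k] a) = ω a b • p := by
      intro b p a; simp [hL]
    have hMtmul : ∀ j (p : P) (a : A), M j (p ⊗ₜ[k] a) = e.coord j p • a := by
      intro j p a; simp [hM]
    set E : (P ⊗[k] A) ≃ₗ[k] (Module.Basis.ofVectorSpaceIndex k P →₀ A) :=
      (TensorProduct.congr e.repr (LinearEquiv.refl k A)).trans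
        (TensorProduct.finsuppScalarLeft k A _) with hE
    have aux1 : ∀ (x : P ⊗[k] A) (b : A) (q : P), κ (L b x) q = 𝔅 x (q ⊗ₜ[k] b) := by
      intro x b q
      induction x using TensorProduct.induction_on with
      | zero => simp
      | tmul p a =>
        rw [hLtmul, h𝔅, map_smul]
        simp [mul_comm]
      | add u v hu hv => simp [map_add, LinearMap.add_apply, hu, hv]
    have aux2 : ∀ (x : P ⊗[k] A) j (b : A), ω (M j x) b = e.coord j (L b x) := by
      intro x j b
      induction x using TensorProduct.induction_on with
      | zero => simp
      | tmul p a =>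
        rw [hLtmul, hMtmul, map_smul, map_smul]
        simp [mul_comm]
      | add u v hu hv => simp [map_add, LinearMap.add_apply, hu, hv]
    have aux3 : ∀ (x : P ⊗[k] A) j, E x j = M j x := by
      intro x j
      induction x using TensorProduct.induction_on with
      | zero => simp
      | tmul p a =>
        rw [hMtmul]
        simp [hE, Module.Basis.coord_apply]
      | add u v hu hv => simp [map_add, LinearMap.add_apply, Finsupp.add_apply, hu, hv]
    intro x hx
    have key1 : ∀ b : A, L b x = 0 := by
      intro b
      apply hκnd
      intro q
      rw [aux1, hx]
    have key2 : ∀ j, M j x = 0 := by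
      intro j
      apply hωnd
      intro b
      rw [aux2, key1, map_zero]
    have hEx : E x = 0 := by
      ext j
      rw [aux3, key2]; simp
    have := congrArg E.symm hEx
    simpa using this
  · -- invariance
    have scalar : ∀ (p₁ p₂ p₃ : P) (a₁ a₂ a₃ : A),
        κ (mul p₁ p₂) p₃ * ω (dia a₁ a₂) a₃ - κ (mul p₂ p₁) p₃ * ω (dia a₂ a₁) a₃ =
        κ p₁ (mul p₂ p₃) * ω a₁ (dia a₂ a₃) - κ p₁ (mul p₃ p₂) * ω a₁ (dia a₃ a₂) := by
      intro p₁ p₂ p₃ a₁ a₂ a₃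
      have h1 : κ (mul p₁ p₂) p₃ = κ p₁ (mul p₂ p₃) - κ p₁ (mul p₃ p₂) := by
        rw [hκinv, map_sub]
      have hu3 : κ p₂ (mul p₁ p₃) = κ p₁ (mul p₂ p₃) - κ p₁ (mul p₃ p₂) := by
        rw [hκskew, hκinv, map_sub]; ring
      have hu4 : κ p₂ (mul p₃ p₁) = -κ p₁ (mul p₃ p₂) := by
        have h := hκinv p₂ p₃ p₁
        rw [map_sub] at h
        have h' : κ (mul p₂ p₃) p₁ = -κ p₁ (mul p₂ p₃) := by rw [hκskew]
        rw [h'] at h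
        rw [hu3] at h
        linear_combination -h
      have h2 : κ (mul p₂ p₁) p₃ = κ p₁ (mul p₂ p₃) := by
        rw [hκinv, map_sub, hu3, hu4]; ring
      have hv4 : ω a₂ (dia a₃ a₁) = ω a₁ (dia a₃ a₂) - ω a₁ (dia a₂ a₃) := by
        have h := hωinv a₃ a₁ a₂
        rw [map_sub] at h
        rw [hωskew (dia a₃ a₁) a₂] at h
        linear_combination -h
      have hv3 : ω a₂ (dia a₁ a₃) = -ω a₁ (dia a₂ a₃) := by
        have h := hωinv a₃ a₂ a₁
        rw [map_sub] at h
        rw [hωskew (dia a₃ a₂) a₁] at h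
        rw [hv4] at h
        linear_combination -h
      have h3 : ω (dia a₁ a₂) a₃ = ω a₁ (dia a₃ a₂) := by
        rw [hωinv, map_sub, hv3, hv4]; ring
      have h4 : ω (dia a₂ a₁) a₃ = ω a₁ (dia a₃ a₂) - ω a₁ (dia a₂ a₃) := by
        rw [hωinv, map_sub]; ring
      rw [h1, h2, h3, h4]; ring
    intro x y z
    induction x using TensorProduct.induction_on with
    | zero => simp
    | tmul p₁ a₁ =>
      induction y using TensorProduct.induction_on with
      | zero => simp
      | tmul p₂ a₂ =>
        induction z using TensorProduct.induction_on with
        | zero => simp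
        | tmul p₃ a₃ =>
          rw [hB, hB, map_sub, map_sub, LinearMap.sub_apply, h𝔅, h𝔅, h𝔅, h𝔅]
          exact scalar p₁ p₂ p₃ a₁ a₂ a₃
        | add u v hu hv => simp only [map_add, hu, hv]
      | add u v hu hv => simp only [map_add, LinearMap.add_apply, hu, hv]
    | add u v hu hv => simp only [map_add, LinearMap.add_apply, hu, hv]
end

section
/- Let $(A = \oplus_{i \in \mathbb{Z}} A_i, \diamond)$ be a $\mathbb{Z}$-graded pre-Lie algebra with all $A_i$ finite-dimensional, and $A^\circ = \oplus_i A_{-i}^*$ its restricted dual. On $A \oplus A^\circ$ define $a \diamond' b = a \diamond b$, $a \diamond' a^* = -L_\diamond^*(a)a^* + R_\diamond^*(a)a^*$, $a^* \diamond' a = R_\diamond^*(a)a^*$, $a^* \diamond' b^* = 0$ for $a, b \in A$, $a^*, b^* \in A^\circ$. Then $(A \oplus A^\circ, \diamond')$ is a pre-Lie algebra, and the skew-symmetric form $\omega(a + a^*, b + b^*) = \langle a^*, b \rangle - \langle b^*, a \rangle$ is nondegenerate and invariant: $\omega(x \diamond' y, z) = -\omega(y, x \diamond' z - z \diamond' x)$.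 -/
/-!
The dual component of `x ⋄' y` is built from transposes of left and right multiplications, so
after evaluation at a vector of `A` the pre-Lie identity on `A ⊕ A°` becomes a combination of
instances of the pre-Lie identity of `A`, and invariance of `ω` is plain ring arithmetic.
The grading is what keeps `A°` stable: multiplication by an element of degree `j` shifts degrees
by `j`, so its transpose shifts the finite support of a functional by `-j`. Nondegeneracy holds
because the functionals `g ∘ πᵢ`, with `πᵢ` the projection onto `Aᵢ`, lie in `A°` and separate
the points of `A`.
-/

open Module

section RestrictedDual

variable {R M ι : Type*} [CommSemiring R] [AddCommMonoid M] [Module R M]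

/-- The restricted dual `A° = ⊕ᵢ Aᵢ*`, realized inside `Dual R M`. -/
def restrictedDual (𝒜 : ι → Submodule R M) : Submodule R (Dual R M) where
  carrier := {f | ∃ S : Finset ι, ∀ i ∉ S, ∀ a ∈ 𝒜 i, f a = 0}
  zero_mem' := ⟨∅, fun _ _ _ _ => rfl⟩
  add_mem' := by
    classical
    rintro f g ⟨S, hS⟩ ⟨T, hT⟩
    refine ⟨S ∪ T, fun i hi a ha => ?_⟩
    rw [Finset.mem_union, not_or] at hi
    simp [hS i hi.1 a ha, hT i hi.2 a ha]
  smul_mem' := by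
    rintro c f ⟨S, hS⟩
    exact ⟨S, fun i hi a ha => by simp [hS i hi a ha]⟩

variable {𝒜 : ι → Submodule R M}

theorem dualMap_mem_restrictedDual_of_shift [AddGroup ι] {g : M →ₗ[R] M} (j : ι)
    (hg : ∀ i, ∀ a ∈ 𝒜 i, g a ∈ 𝒜 (j + i)) {f : Dual R M} (hf : f ∈ restrictedDual 𝒜) :
    g.dualMap f ∈ restrictedDual 𝒜 := by
  classical
  obtain ⟨S, hS⟩ := hf
  refine ⟨S.image (-j + ·), fun i hi a ha => hS _ (fun hmem => hi ?_) _ (hg i a ha)⟩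
  exact Finset.mem_image.2 ⟨j + i, hmem, neg_add_cancel_left j i⟩

theorem dualMap_mem_restrictedDual [AddCommGroup ι] [DecidableEq ι]
    (hint : DirectSum.IsInternal 𝒜) {μ : M →ₗ[R] M →ₗ[R] M}
    (hμ : ∀ i j a b, a ∈ 𝒜 i → b ∈ 𝒜 j → μ a b ∈ 𝒜 (i + j)) (a : M) {f : Dual R M}
    (hf : f ∈ restrictedDual 𝒜) :
    (μ a).dualMap f ∈ restrictedDual 𝒜 ∧ (μ.flip a).dualMap f ∈ restrictedDual 𝒜 := by
  have ha : a ∈ ⨆ i, 𝒜 i := hint.submodule_iSup_eq_top ▸ Submodule.mem_top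
  induction ha using Submodule.iSup_induction' with
  | mem j a ha =>
    refine ⟨dualMap_mem_restrictedDual_of_shift j (fun i b hb => hμ j i a b ha hb) hf,
      dualMap_mem_restrictedDual_of_shift j (fun i b hb => ?_) hf⟩
    rw [add_comm]
    exact hμ i j b a hb ha
  | zero =>
    simp only [LinearMap.dualMap_def, map_zero, LinearMap.zero_apply]
    exact ⟨zero_mem _, zero_mem _⟩
  | add a b _ _ ha hb =>
    simp only [LinearMap.dualMap_def, map_add, LinearMap.add_apply] at ha hb ⊢
    exact ⟨add_mem ha.1 hb.1, add_mem ha.2 hb.2⟩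

theorem component_mem_restrictedDual [DecidableEq ι] [DirectSum.Decomposition 𝒜] (i : ι)
    (g : Dual R (𝒜 i)) :
    g ∘ₗ DirectSum.component R ι (fun i => 𝒜 i) i ∘ₗ (DirectSum.decomposeLinearEquiv 𝒜).toLinearMap
      ∈ restrictedDual 𝒜 := by
  refine ⟨{i}, fun j hj a ha => ?_⟩
  have hcomp : DirectSum.decompose 𝒜 a i = 0 :=
    Subtype.ext (DirectSum.decompose_of_mem_ne 𝒜 ha (by simpa using hj))
  simp [DirectSum.decomposeLinearEquiv_apply, ← DirectSum.apply_eq_component, hcomp]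

theorem eq_zero_of_forall_restrictedDual_apply_eq_zero [DecidableEq ι] [∀ i, Projective R (𝒜 i)]
    (hint : DirectSum.IsInternal 𝒜) {a : M} (h : ∀ f ∈ restrictedDual 𝒜, f a = 0) : a = 0 := by
  let := hint.chooseDecomposition
  have hcomp : ∀ i, DirectSum.decompose 𝒜 a i = 0 := fun i =>
    (forall_dual_apply_eq_zero_iff R _).1 fun g => h _ (component_mem_restrictedDual i g)
  exact (DirectSum.decompose 𝒜).injective (by ext i; simp [hcomp])

end RestrictedDual

section DualExtension

variable {R M : Type*} [CommRing R] [AddCommGroup M] [Module R M]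

def dualExtensionMul (μ : M →ₗ[R] M →ₗ[R] M) (x y : M × Dual R M) : M × Dual R M :=
  (μ x.1 y.1, -(μ x.1).dualMap y.2 + (μ.flip x.1).dualMap y.2 + (μ.flip y.1).dualMap x.2)

def dualPairingForm (x y : M × Dual R M) : R :=
  x.2 y.1 - y.2 x.1

theorem dualPairingForm_comm (x y : M × Dual R M) :
    dualPairingForm x y = -dualPairingForm y x := by
  simp only [dualPairingForm, neg_sub]

theorem dualPairingForm_dualExtensionMul (μ : M →ₗ[R] M →ₗ[R] M) (x y z : M × Dual R M) :
    dualPairingForm (dualExtensionMul μ x y) z =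
      -dualPairingForm y (dualExtensionMul μ x z - dualExtensionMul μ z x) := by
  simp only [dualPairingForm, dualExtensionMul, Prod.fst_sub, Prod.snd_sub, LinearMap.sub_apply,
    LinearMap.add_apply, LinearMap.neg_apply, LinearMap.dualMap_apply, LinearMap.flip_apply,
    map_sub]
  ring

theorem dualExtensionMul_preLie {μ : M →ₗ[R] M →ₗ[R] M}
    (hμ : ∀ a b c, μ (μ a b) c - μ a (μ b c) = μ (μ b a) c - μ b (μ a c))
    (x y z : M × Dual R M) :
    dualExtensionMul μ (dualExtensionMul μ x y) z - dualExtensionMul μ x (dualExtensionMul μ y z) =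
      dualExtensionMul μ (dualExtensionMul μ y x) z -
        dualExtensionMul μ y (dualExtensionMul μ x z) := by
  obtain ⟨a, f⟩ := x
  obtain ⟨b, g⟩ := y
  obtain ⟨c, h⟩ := z
  refine Prod.ext (hμ a b c) (LinearMap.ext fun t => ?_)
  -- Evaluated at `t`, the dual component is a combination of the pre-Lie identity of `μ`
  -- at five triples, paired with `h`, `g` and `f`.
  have e₁ := congrArg h (hμ a b t)
  have e₂ := congrArg h (hμ t a b)
  have e₃ := congrArg h (hμ t b a)
  have e₄ := congrArg g (hμ t a c)
  have e₅ := congrArg f (hμ t b c)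
  simp only [map_sub] at e₁ e₂ e₃ e₄ e₅
  simp only [dualExtensionMul, Prod.snd_sub, LinearMap.sub_apply, LinearMap.add_apply,
    LinearMap.neg_apply, LinearMap.dualMap_apply, LinearMap.flip_apply, map_add, map_neg]
  linear_combination -e₁ - e₂ + e₃ - e₄ + e₅

theorem dualExtensionMul_snd_mem_restrictedDual {ι : Type*} [AddCommGroup ι] [DecidableEq ι]
    {𝒜 : ι → Submodule R M} (hint : DirectSum.IsInternal 𝒜) {μ : M →ₗ[R] M →ₗ[R] M}
    (hμ : ∀ i j a b, a ∈ 𝒜 i → b ∈ 𝒜 j → μ a b ∈ 𝒜 (i + j)) {x y : M × Dual R M}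
    (hx : x.2 ∈ restrictedDual 𝒜) (hy : y.2 ∈ restrictedDual 𝒜) :
    (dualExtensionMul μ x y).2 ∈ restrictedDual 𝒜 :=
  add_mem (add_mem (neg_mem (dualMap_mem_restrictedDual hint hμ x.1 hy).1)
    (dualMap_mem_restrictedDual hint hμ x.1 hy).2) (dualMap_mem_restrictedDual hint hμ y.1 hx).2

theorem eq_zero_of_dualPairingForm_eq_zero {ι : Type*} [DecidableEq ι] {𝒜 : ι → Submodule R M}
    [∀ i, Projective R (𝒜 i)] (hint : DirectSum.IsInternal 𝒜) {x : M × Dual R M}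
    (h : ∀ y : M × Dual R M, y.2 ∈ restrictedDual 𝒜 → dualPairingForm x y = 0) : x = 0 := by
  have hsnd : x.2 = 0 := LinearMap.ext fun b => by
    simpa [dualPairingForm] using h (b, 0) (zero_mem _)
  have hfst : x.1 = 0 := eq_zero_of_forall_restrictedDual_apply_eq_zero hint fun f hf => by
    simpa [dualPairingForm, hsnd] using h (0, f) hf
  exact Prod.ext hfst hsnd

end DualExtension

theorem stmt16_general {k A : Type*} [Field k] [AddCommGroup A] [Module k A]
    (𝒜 : ℤ → Submodule k A)
    (hint : DirectSum.IsInternal 𝒜)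
    (dia : A →ₗ[k] A →ₗ[k] A)
    (hpre : ∀ a b c : A,
      dia (dia a b) c - dia a (dia b c) = dia (dia b a) c - dia b (dia a c))
    (hgr : ∀ (i j : ℤ) (a b : A), a ∈ 𝒜 i → b ∈ 𝒜 j → dia a b ∈ 𝒜 (i + j))
    (C : Set (Module.Dual k A))
    (hC : ∀ f, f ∈ C ↔ ∃ S : Finset ℤ, ∀ i ∉ S, ∀ a ∈ 𝒜 i, f a = 0)
    (dmd : (A × Module.Dual k A) → (A × Module.Dual k A) → (A × Module.Dual k A))
    (hdmd : ∀ x y : A × Module.Dual k A, dmd x y =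
      (dia x.1 y.1,
        -(dia x.1).dualMap y.2 + (dia.flip x.1).dualMap y.2 + (dia.flip y.1).dualMap x.2))
    (ω : (A × Module.Dual k A) → (A × Module.Dual k A) → k)
    (hω : ∀ x y : A × Module.Dual k A, ω x y = x.2 y.1 - y.2 x.1) :
    (∀ x y : A × Module.Dual k A, x.2 ∈ C → y.2 ∈ C → (dmd x y).2 ∈ C) ∧
    (∀ x y z : A × Module.Dual k A, x.2 ∈ C → y.2 ∈ C → z.2 ∈ C →
      dmd (dmd x y) z - dmd x (dmd y z) = dmd (dmd y x) z - dmd y (dmd x z)) ∧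
    (∀ x y : A × Module.Dual k A, ω x y = -ω y x) ∧
    (∀ x y z : A × Module.Dual k A, x.2 ∈ C → y.2 ∈ C → z.2 ∈ C →
      ω (dmd x y) z = -ω y (dmd x z - dmd z x)) ∧
    (∀ x : A × Module.Dual k A, x.2 ∈ C →
      (∀ y : A × Module.Dual k A, y.2 ∈ C → ω x y = 0) → x = 0) := by
  obtain rfl : C = restrictedDual 𝒜 := Set.ext hC
  obtain rfl : dmd = dualExtensionMul dia := funext₂ hdmd
  obtain rfl : ω = dualPairingForm := funext₂ hω
  exact ⟨fun x y hx hy => dualExtensionMul_snd_mem_restrictedDual hint hgr hx hy,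
    fun x y z _ _ _ => dualExtensionMul_preLie hpre x y z,
    dualPairingForm_comm,
    fun x y z _ _ _ => dualPairingForm_dualExtensionMul dia x y z,
    fun _ _ h => eq_zero_of_dualPairingForm_eq_zero hint h⟩

/-- Let `(A = ⊕ᵢ Aᵢ, ⋄)` be a `ℤ`-graded pre-Lie algebra with all pieces
finite-dimensional and `A° = ⊕ᵢ A₋ᵢ*` its restricted dual (realized as the set `C` of
functionals vanishing on all but finitely many graded pieces). On `A ⊕ A°` (modeled inside
`A × A*`) define `a ⋄' b = a⋄b`, `a ⋄' a* = -L*(a)a* + R*(a)a*`, `a* ⋄' a = R*(a)a*`,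
`a* ⋄' b* = 0`. Then `(A ⊕ A°, ⋄')` is a pre-Lie algebra (in particular `A°` is preserved),
and the skew-symmetric form `ω(a+a*, b+b*) = ⟨a*,b⟩ - ⟨b*,a⟩` is nondegenerate on `A ⊕ A°`
and invariant: `ω(x⋄'y, z) = -ω(y, x⋄'z - z⋄'x)`. -/
theorem stmt16 {k A : Type*} [Field k] [AddCommGroup A] [Module k A]
    (𝒜 : ℤ → Submodule k A)
    (hfin : ∀ i, FiniteDimensional k (𝒜 i))
    (hint : DirectSum.IsInternal 𝒜)
    (dia : A →ₗ[k] A →ₗ[k] A)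
    (hpre : ∀ a b c : A,
      dia (dia a b) c - dia a (dia b c) = dia (dia b a) c - dia b (dia a c))
    (hgr : ∀ (i j : ℤ) (a b : A), a ∈ 𝒜 i → b ∈ 𝒜 j → dia a b ∈ 𝒜 (i + j))
    (C : Set (Module.Dual k A))
    (hC : ∀ f, f ∈ C ↔ ∃ S : Finset ℤ, ∀ i ∉ S, ∀ a ∈ 𝒜 i, f a = 0)
    (dmd : (A × Module.Dual k A) → (A × Module.Dual k A) → (A × Module.Dual k A))
    (hdmd : ∀ x y : A × Module.Dual k A, dmd x y =
      (dia x.1 y.1,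
        -(dia x.1).dualMap y.2 + (dia.flip x.1).dualMap y.2 + (dia.flip y.1).dualMap x.2))
    (ω : (A × Module.Dual k A) → (A × Module.Dual k A) → k)
    (hω : ∀ x y : A × Module.Dual k A, ω x y = x.2 y.1 - y.2 x.1) :
    (∀ x y : A × Module.Dual k A, x.2 ∈ C → y.2 ∈ C → (dmd x y).2 ∈ C) ∧
    (∀ x y z : A × Module.Dual k A, x.2 ∈ C → y.2 ∈ C → z.2 ∈ C →
      dmd (dmd x y) z - dmd x (dmd y z) = dmd (dmd y x) z - dmd y (dmd x z)) ∧
    (∀ x y : A × Module.Dual k A, ω x y = -ω y x) ∧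
    (∀ x y z : A × Module.Dual k A, x.2 ∈ C → y.2 ∈ C → z.2 ∈ C →
      ω (dmd x y) z = -ω y (dmd x z - dmd z x)) ∧
    (∀ x : A × Module.Dual k A, x.2 ∈ C →
      (∀ y : A × Module.Dual k A, y.2 ∈ C → ω x y = 0) → x = 0) :=
  stmt16_general 𝒜 hint dia hpre hgr C hC dmd hdmd ω hω
end

section
/- There is no skew-symmetric nondegenerate invariant bilinear form on the pre-Lie algebra $(W_n, \diamond)$, where $W_n = \{\sum_{i=1}^n f_i \partial_i : f_i \in \mathbf{k}[x_1^{\pm},\ldots,x_n^{\pm}]\}$ with $u\partial_i \diamond v\partial_j = u \cdot \partial_i(v)\partial_j$. In fact, any skew-symmetric invariant bilinear form $\omega$ on $W_n$ satisfies $\omega(x_1 \partial_1, W_n) = 0$. -/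
/-!
Write `E = xᵢ∂ᵢ`. Since `E ⋄ x^m∂ⱼ = mᵢ x^m∂ⱼ`, invariance applied to `(E, x^m∂ⱼ, E)` gives
`mᵢ ω(x^m∂ⱼ, E) = 0`. When `mᵢ = 0`, both `∂ᵢ ⋄ x^m∂ⱼ` and `x^m∂ⱼ ⋄ ∂ᵢ` vanish, so invariance
applied to `(∂ᵢ, xᵢ²∂ᵢ, x^m∂ⱼ)` gives `ω(2E, x^m∂ⱼ) = 0`, because `∂ᵢ ⋄ xᵢ²∂ᵢ = 2E`.
Hence `ω(E, -)` vanishes on a basis, and `E ≠ 0` lies in the radical of `ω`.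
-/

open Finsupp

section InvariantForm

variable {R M : Type*} [CommRing R] [AddCommGroup M] [Module R M]

def IsInvariantForm (dia : M →ₗ[R] M →ₗ[R] M) (ω : M →ₗ[R] M →ₗ[R] R) : Prop :=
  ∀ x y z, ω (dia x y) z = -ω y (dia x z - dia z x)

theorem IsInvariantForm.apply_dia_self {dia : M →ₗ[R] M →ₗ[R] M} {ω : M →ₗ[R] M →ₗ[R] R}
    (hinv : IsInvariantForm dia ω) (x y : M) : ω (dia x y) x = 0 := by
  simpa using hinv x y x

end InvariantForm

namespace WittPreLie

variable {k : Type*} [CommRing k] {n : ℕ}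

def IsProduct
    (dia : (((Fin n → ℤ) × Fin n) →₀ k) →ₗ[k] (((Fin n → ℤ) × Fin n) →₀ k) →ₗ[k]
      (((Fin n → ℤ) × Fin n) →₀ k)) : Prop :=
  ∀ (m m' : Fin n → ℤ) (i j : Fin n),
    dia (single (m, i) 1) (single (m', j) 1) =
      (m' i) • single ((fun l => m l + m' l - if l = i then 1 else 0), j) (1 : k)

variable {dia : (((Fin n → ℤ) × Fin n) →₀ k) →ₗ[k] (((Fin n → ℤ) × Fin n) →₀ k) →ₗ[k]
  (((Fin n → ℤ) × Fin n) →₀ k)}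

theorem IsProduct.dia_euler (hdia : IsProduct dia) (i : Fin n) (m : Fin n → ℤ) (j : Fin n) :
    dia (single ((fun l => if l = i then 1 else 0), i) 1) (single (m, j) 1) =
      m i • single (m, j) (1 : k) := by
  rw [hdia]
  congr 3
  funext l
  split_ifs <;> ring

theorem IsProduct.dia_partial_of_eq_zero (hdia : IsProduct dia) {i : Fin n} {m : Fin n → ℤ}
    (hm : m i = 0) (j : Fin n) : dia (single (0, i) 1) (single (m, j) 1) = 0 := by
  rw [hdia, hm, zero_smul]

theorem IsProduct.dia_partial_right (hdia : IsProduct dia) (i : Fin n) (m : Fin n → ℤ)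
    (j : Fin n) : dia (single (m, j) 1) (single (0, i) 1) = 0 := by
  rw [hdia, Pi.zero_apply, zero_smul]

theorem IsProduct.dia_partial_sq (hdia : IsProduct dia) (i : Fin n) :
    dia (single (0, i) 1) (single ((fun l => if l = i then 2 else 0), i) 1) =
      (2 : ℤ) • single ((fun l => if l = i then 1 else 0), i) (1 : k) := by
  rw [hdia, if_pos rfl]
  congr 3
  funext l
  split_ifs <;> simp

variable [IsDomain k] [CharZero k]
  {ω : (((Fin n → ℤ) × Fin n) →₀ k) →ₗ[k] (((Fin n → ℤ) × Fin n) →₀ k) →ₗ[k] k}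

theorem form_euler_single_eq_zero (hdia : IsProduct dia) (hinv : IsInvariantForm dia ω)
    (hskew : ∀ x y, ω x y = -ω y x) (i : Fin n) (m : Fin n → ℤ) (j : Fin n) :
    ω (single ((fun l => if l = i then 1 else 0), i) 1) (single (m, j) 1) = 0 := by
  by_cases hm : m i = 0
  · have h := hinv (single (0, i) 1) (single ((fun l => if l = i then 2 else 0), i) 1)
      (single (m, j) 1)
    rw [hdia.dia_partial_sq, hdia.dia_partial_of_eq_zero hm, hdia.dia_partial_right, sub_zero,
      map_zero, neg_zero, map_zsmul, LinearMap.smul_apply] at h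
    exact (smul_eq_zero.mp h).resolve_left two_ne_zero
  · have h := hinv.apply_dia_self (single ((fun l => if l = i then 1 else 0), i) 1)
      (single (m, j) 1)
    rw [hdia.dia_euler, map_zsmul, LinearMap.smul_apply] at h
    rw [hskew, (smul_eq_zero.mp h).resolve_left hm, neg_zero]

theorem form_euler_eq_zero (hdia : IsProduct dia) (hinv : IsInvariantForm dia ω)
    (hskew : ∀ x y, ω x y = -ω y x) (i : Fin n) :
    ω (single ((fun l => if l = i then 1 else 0), i) 1) = 0 :=
  lhom_ext fun ⟨m, j⟩ c => by
    rw [← smul_single_one (m, j) c, map_smul, form_euler_single_eq_zero hdia hinv hskew, smul_zero,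
      LinearMap.zero_apply]

end WittPreLie

open WittPreLie in
/-- Any skew-symmetric invariant bilinear form `ω` on the pre-Lie algebra
`(Wₙ, ⋄)` (the free `k`-module on basis `(m, i) ↔ x^m ∂ᵢ`, with
`x^m ∂ᵢ ⋄ x^{m'} ∂ⱼ = m'ᵢ • x^{m+m'-eᵢ} ∂ⱼ`) satisfies `ω(x₁∂₁, Wₙ) = 0`; in particular
there is no skew-symmetric nondegenerate invariant bilinear form on `(Wₙ, ⋄)`. -/
theorem stmt17 {k : Type*} [Field k] [CharZero k]
    (n : ℕ) (hn : 0 < n)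
    (dia : (((Fin n → ℤ) × Fin n) →₀ k) →ₗ[k] (((Fin n → ℤ) × Fin n) →₀ k) →ₗ[k]
      (((Fin n → ℤ) × Fin n) →₀ k))
    (hdia : ∀ (m m' : Fin n → ℤ) (i j : Fin n),
      dia (Finsupp.single (m, i) 1) (Finsupp.single (m', j) 1) =
        (m' i) • Finsupp.single ((fun l => m l + m' l - if l = i then 1 else 0), j) (1 : k))
    (ω : (((Fin n → ℤ) × Fin n) →₀ k) →ₗ[k] (((Fin n → ℤ) × Fin n) →₀ k) →ₗ[k] k)
    (hskew : ∀ x y, ω x y = -ω y x)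
    (hinv : ∀ x y z, ω (dia x y) z = -ω y (dia x z - dia z x)) :
    (∀ y, ω (Finsupp.single ((fun l => if l = (⟨0, hn⟩ : Fin n) then 1 else 0),
      (⟨0, hn⟩ : Fin n)) (1 : k)) y = 0) ∧
    ¬(∀ x, (∀ y, ω x y = 0) → x = 0) := by
  have hE := form_euler_eq_zero (dia := dia) hdia hinv hskew ⟨0, hn⟩
  have hE_apply : ∀ y, ω (single ((fun l => if l = (⟨0, hn⟩ : Fin n) then 1 else 0),
      (⟨0, hn⟩ : Fin n)) (1 : k)) y = 0 := fun y => by rw [hE, LinearMap.zero_apply]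
  exact ⟨hE_apply, fun hnondeg => one_ne_zero (single_eq_zero.mp (hnondeg _ hE_apply))⟩
end

section
/- Let $(A, [-,-], \omega)$ be a finite-dimensional symplectic Lie algebra. Then the binary operation $\diamond$ defined implicitly by $\omega(a \diamond b, c) = -\omega(b, [a, c])$ for all $a, b, c$ is well-defined and gives a pre-Lie algebra structure on $A$ whose commutator $a \diamond b - b \diamond a$ equals $[a,b]$. -/
/-!
The defining identity says that left multiplication by `a` is minus the `ω`-adjoint of `ad a`;
this adjoint exists because `ω` identifies `L` with its dual. Since `a ↦ ad a` is a Lie algebra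
morphism, so is `a ↦ a ⋄ -`, i.e. `[a, b] ⋄ c = a ⋄ (b ⋄ c) - b ⋄ (a ⋄ c)`, for any nondegenerate
`ω`. The cocycle condition together with skew-symmetry is exactly what makes
`a ⋄ b - b ⋄ a = [a, b]`, and substituting this into the previous identity gives the
pre-Lie identity.
-/

theorem LinearMap.SeparatingLeft.injective {R M N : Type*} [CommRing R] [AddCommGroup M]
    [Module R M] [AddCommGroup N] [Module R N] {B : M →ₗ[R] N →ₗ[R] R} (hB : B.SeparatingLeft) :
    Function.Injective B :=
  LinearMap.ker_eq_bot.mp (LinearMap.separatingLeft_iff_ker_eq_bot.mp hB)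

namespace LieAlgebra

open LinearMap

section CommRing

variable {k L : Type*} [CommRing k] [LieRing L] [LieAlgebra k L] {ω : L →ₗ[k] L →ₗ[k] k}

variable {dia : L →ₗ[k] L →ₗ[k] L} (hdia : ∀ a b c : L, ω (dia a b) c = -ω b ⁅a, c⁆)
include hdia

theorem sub_swap_eq_lie_of_cocycle (hω : ω.SeparatingLeft) (hskew : ∀ a b : L, ω a b = -ω b a)
    (hcocycle : ∀ a b c : L, ω ⁅a, b⁆ c + ω ⁅b, c⁆ a + ω ⁅c, a⁆ b = 0) (a b : L) :
    dia a b - dia b a = ⁅a, b⁆ := by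
  refine hω.injective (LinearMap.ext fun c => ?_)
  have h := hcocycle a b c
  rw [hskew ⁅b, c⁆, hskew ⁅c, a⁆, ← lie_skew c a, map_neg] at h
  simp only [map_sub, LinearMap.sub_apply, hdia]
  linear_combination -h

theorem lie_apply_eq_sub (hω : ω.SeparatingLeft) (a b c : L) :
    dia ⁅a, b⁆ c = dia a (dia b c) - dia b (dia a c) := by
  refine hω.injective (LinearMap.ext fun d => ?_)
  simp only [map_sub, LinearMap.sub_apply, hdia, lie_lie]
  ring

theorem preLie_identity_of_cocycle (hω : ω.SeparatingLeft) (hskew : ∀ a b : L, ω a b = -ω b a)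
    (hcocycle : ∀ a b c : L, ω ⁅a, b⁆ c + ω ⁅b, c⁆ a + ω ⁅c, a⁆ b = 0) (a b c : L) :
    dia (dia a b) c - dia a (dia b c) = dia (dia b a) c - dia b (dia a c) := by
  have h := lie_apply_eq_sub hdia hω a b c
  rw [← sub_swap_eq_lie_of_cocycle hdia hω hskew hcocycle, map_sub, LinearMap.sub_apply] at h
  exact sub_eq_sub_iff_sub_eq_sub.mpr h

end CommRing

section Field

variable {k L : Type*} [Field k] [LieRing L] [LieAlgebra k L] [FiniteDimensional k L]
  (ω : L →ₗ[k] L →ₗ[k] k)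

noncomputable def coadjointProduct (hω : ω.Nondegenerate) : L →ₗ[k] L →ₗ[k] L :=
  (LinearMap.mk₂ k (fun a b => -(ω b ∘ₗ ad k L a))
    (fun a a' b => by rw [map_add, comp_add, neg_add])
    (fun r a b => by rw [map_smul, comp_smul, smul_neg])
    (fun a b b' => by rw [map_add, add_comp, neg_add])
    (fun r a b => by rw [map_smul, smul_comp, smul_neg])).compr₂
    (BilinForm.toDual ω hω).symm.toLinearMap

theorem coadjointProduct_apply_apply (hω : ω.Nondegenerate) (a b c : L) :
    ω (coadjointProduct ω hω a b) c = -ω b ⁅a, c⁆ := by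
  simp [coadjointProduct]

end Field

end LieAlgebra

open LieAlgebra in
/-- On a finite-dimensional symplectic Lie algebra `(A, [-,-], ω)` there is a
(well-defined) bilinear operation `⋄` determined by `ω(a⋄b, c) = -ω(b, [a,c])`, and it is a
pre-Lie algebra structure whose commutator recovers the Lie bracket. -/
theorem stmt18 {k L : Type*} [Field k] [LieRing L] [LieAlgebra k L] [FiniteDimensional k L]
    (ω : L →ₗ[k] L →ₗ[k] k)
    (hskew : ∀ a b : L, ω a b = -ω b a)
    (hnd : ∀ a : L, (∀ b : L, ω a b = 0) → a = 0)
    (hcocycle : ∀ a b c : L, ω ⁅a, b⁆ c + ω ⁅b, c⁆ a + ω ⁅c, a⁆ b = 0) :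
    ∃ dia : L →ₗ[k] L →ₗ[k] L,
      (∀ a b c : L, ω (dia a b) c = -ω b ⁅a, c⁆) ∧
      (∀ a b c : L,
        dia (dia a b) c - dia a (dia b c) = dia (dia b a) c - dia b (dia a c)) ∧
      (∀ a b : L, dia a b - dia b a = ⁅a, b⁆) := by
  have hrefl : ω.IsRefl := fun a b h => by rw [hskew, h, neg_zero]
  have hω : ω.Nondegenerate := hrefl.nondegenerate_iff_separatingLeft.mpr hnd
  have hdia := coadjointProduct_apply_apply ω hω
  exact ⟨coadjointProduct ω hω, hdia, preLie_identity_of_cocycle hdia hnd hskew hcocycle,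
    sub_swap_eq_lie_of_cocycle hdia hnd hskew hcocycle⟩
end
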